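/- arXiv:1509.06042 — 7 statements merged into one kernel-verified Lean document; each statement's English description precedes it below -/
import Mathlib

section
/- Let n ≥ 1 and let σ and τ be Z-retractions of [0,1]ⁿ such that A_σ = A_τ. Then the restriction of σ to R_τ is a Z-homeomorphism of R_τ onto R_σ, and its inverse is the restriction of τ to R_σ. -/
open Set MeasureTheory

/-- The unit cube `[0,1]^n` in `ℝ^n`. -/
def cubeSet (n : ℕ) : Set (Fin n → ℝ) := Set.Icc 0 1

/-- A point all of whose coordinates are rational. -/
def IsRationalPoint {n : ℕ} (v : Fin n → ℝ) : Prop := ∀ i, ∃ q : ℚ, v i = (q : ℝ)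

/-- A rational polyhedron: a finite union of convex hulls of finite sets of rational points. -/
def IsRationalPolyhedron {n : ℕ} (P : Set (Fin n → ℝ)) : Prop :=
  ∃ S : Finset (Finset (Fin n → ℝ)),
    (∀ F ∈ S, ∀ v ∈ F, IsRationalPoint v) ∧
    P = ⋃ F ∈ S, convexHull ℝ (F : Set (Fin n → ℝ))

/-- An affine map `x ↦ Mx + b` with integer matrix `M` and integer vector `b`. -/
def IsIntAffine {n m : ℕ} (g : (Fin n → ℝ) → (Fin m → ℝ)) : Prop :=
  ∃ (M : Fin m → Fin n → ℤ) (b : Fin m → ℤ),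
    ∀ x i, g x i = (∑ j, (M i j : ℝ) * x j) + (b i : ℝ)

/-- A Z-map on `P`: continuous on `P`, with finitely many integer affine pieces. -/
def IsZMapOn {n m : ℕ} (P : Set (Fin n → ℝ)) (f : (Fin n → ℝ) → (Fin m → ℝ)) : Prop :=
  ContinuousOn f P ∧
  ∃ (k : ℕ) (g : Fin k → (Fin n → ℝ) → (Fin m → ℝ)),
    (∀ i, IsIntAffine (g i)) ∧ ∀ x ∈ P, ∃ i, f x = g i x

/-- `f` restricted to `P` is a Z-homeomorphism of `P` onto `Q`. -/
def IsZHomeoOnto {n m : ℕ} (P : Set (Fin n → ℝ)) (Q : Set (Fin m → ℝ))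
    (f : (Fin n → ℝ) → (Fin m → ℝ)) : Prop :=
  IsZMapOn P f ∧ f '' P = Q ∧ Set.InjOn f P ∧
  ∃ g : (Fin m → ℝ) → (Fin n → ℝ),
    IsZMapOn Q g ∧ (∀ x ∈ P, g (f x) = x) ∧ (∀ y ∈ Q, f (g y) = y)

/-- A Z-retraction of the cube `[0,1]^n`. -/
def IsZRetraction {n : ℕ} (σ : (Fin n → ℝ) → (Fin n → ℝ)) : Prop :=
  IsZMapOn (cubeSet n) σ ∧ Set.MapsTo σ (cubeSet n) (cubeSet n) ∧
  ∀ x ∈ cubeSet n, σ (σ x) = σ x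

/-- The range `R_σ = σ([0,1]^n)` of a Z-retraction. -/
def zRange {n : ℕ} (σ : (Fin n → ℝ) → (Fin n → ℝ)) : Set (Fin n → ℝ) := σ '' cubeSet n

/-- A Z-homeomorphism domain for `σ`: a rational polyhedron `Q ⊆ [0,1]^n` such that
`σ` restricted to `Q` is a Z-homeomorphism of `Q` onto `R_σ`. -/
def IsZHomeoDomain {n : ℕ} (σ : (Fin n → ℝ) → (Fin n → ℝ)) (Q : Set (Fin n → ℝ)) : Prop :=
  IsRationalPolyhedron Q ∧ Q ⊆ cubeSet n ∧ IsZHomeoOnto Q (zRange σ) σ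

/-- A (Kuratowski) closed domain: `D` equals the closure of its interior. -/
def IsClosedDomain {n : ℕ} (D : Set (Fin n → ℝ)) : Prop :=
  closure (interior D) = D

/-- A scalar integer affine map. -/
def IsIntAffine1 {n : ℕ} (g : (Fin n → ℝ) → ℝ) : Prop :=
  ∃ (m : Fin n → ℤ) (b : ℤ), ∀ x, g x = (∑ j, (m j : ℝ) * x j) + (b : ℝ)

/-- A scalar Z-map on `P`. -/
def IsZMapOn1 {n : ℕ} (P : Set (Fin n → ℝ)) (f : (Fin n → ℝ) → ℝ) : Prop :=
  ContinuousOn f P ∧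
  ∃ (k : ℕ) (g : Fin k → (Fin n → ℝ) → ℝ),
    (∀ i, IsIntAffine1 (g i)) ∧ ∀ x ∈ P, ∃ i, f x = g i x

/-- The free MV-algebra `McN([0,1]^n)`, viewed as a set of functions on the cube. -/
def McN (n : ℕ) : Set (↥(cubeSet n) → ℝ) :=
  { f | (∀ x, f x ∈ Set.Icc (0:ℝ) 1) ∧
    ∃ g : (Fin n → ℝ) → ℝ, IsZMapOn1 (cubeSet n) g ∧ ∀ x : ↥(cubeSet n), f x = g x.1 }

/-- Pointwise MV-sum `f ⊕ g = min(f + g, 1)`. -/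
def mvAdd {X : Type*} (f g : X → ℝ) : X → ℝ := fun x => min (f x + g x) 1

/-- Pointwise MV-negation `¬f = 1 - f`. -/
def mvNeg {X : Type*} (f : X → ℝ) : X → ℝ := fun x => 1 - f x

/-- The retract `A_σ = {g ∘ σ : g ∈ McN([0,1]^n)}` associated with a Z-retraction `σ`. -/
def retAlg {n : ℕ} (σ : (Fin n → ℝ) → (Fin n → ℝ)) : Set (↥(cubeSet n) → ℝ) :=
  { f | ∃ g ∈ McN n, ∀ (x : ↥(cubeSet n)) (h : σ x.1 ∈ cubeSet n), f x = g ⟨σ x.1, h⟩ }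

/-- `ε` is a retraction of `McN([0,1]^n)` onto `A`. -/
def IsMcNRetraction {n : ℕ} (ε : ↥(McN n) → ↥(McN n)) (A : Set (↥(cubeSet n) → ℝ)) : Prop :=
  (∀ (f g : ↥(McN n)) (h : mvAdd f.1 g.1 ∈ McN n),
      (ε ⟨mvAdd f.1 g.1, h⟩).1 = mvAdd (ε f).1 (ε g).1) ∧
  (∀ (f : ↥(McN n)) (h : mvNeg f.1 ∈ McN n),
      (ε ⟨mvNeg f.1, h⟩).1 = mvNeg (ε f).1) ∧
  (∀ f, ε (ε f) = ε f) ∧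
  Subtype.val '' Set.range ε = A

/-- An MV-isomorphism between two sets of `[0,1]`-valued functions. -/
def IsMVIsoFun {X Y : Type*} (A : Set (X → ℝ)) (B : Set (Y → ℝ)) (h : ↥A → ↥B) : Prop :=
  Function.Bijective h ∧
  (∀ (f g : ↥A) (hm : mvAdd f.1 g.1 ∈ A),
      (h ⟨mvAdd f.1 g.1, hm⟩).1 = mvAdd (h f).1 (h g).1) ∧
  (∀ (f : ↥A) (hm : mvNeg f.1 ∈ A),
      (h ⟨mvNeg f.1, hm⟩).1 = mvNeg (h f).1)

lemma proj_mem_McN {n : ℕ} (i : Fin n) :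
    (fun x : ↥(cubeSet n) => x.1 i) ∈ McN n := by
  constructor
  · intro x
    exact ⟨x.2.1 i, x.2.2 i⟩
  · refine ⟨fun x => x i, ⟨(continuous_apply i).continuousOn,
      1, fun _ x => x i, fun _ => ⟨fun j => if j = i then 1 else 0, 0, fun x => ?_⟩,
      fun x _ => ⟨0, rfl⟩⟩, fun x => rfl⟩
    have : ∀ j, ((if j = i then (1:ℤ) else 0 : ℤ) : ℝ) * x j
        = if j = i then x j else 0 := by
      intro j; split <;> simp
    simp [this]

lemma key_comp {n : ℕ} {σ τ : (Fin n → ℝ) → (Fin n → ℝ)}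
    (hσ : IsZRetraction σ) (hτ : IsZRetraction τ)
    (hA : retAlg σ = retAlg τ) :
    ∀ x ∈ cubeSet n, σ (τ x) = σ x := by
  intro x hx
  funext i
  have hmem : (fun y : ↥(cubeSet n) => σ y.1 i) ∈ retAlg σ :=
    ⟨fun y => y.1 i, proj_mem_McN i, fun y h => rfl⟩
  rw [hA] at hmem
  obtain ⟨g, hg, hgeq⟩ := hmem
  have hτx : τ x ∈ cubeSet n := hτ.2.1 hx
  have hττ : τ (τ x) = τ x := hτ.2.2 x hx
  have h1 := hgeq ⟨τ x, hτx⟩ (hτ.2.1 hτx)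
  have h2 := hgeq ⟨x, hx⟩ hτx
  simp only at h1 h2
  rw [h1, h2]
  congr 1
  exact Subtype.ext hττ

lemma zmap_mono {n : ℕ} {P Q : Set (Fin n → ℝ)} {f : (Fin n → ℝ) → (Fin n → ℝ)}
    (h : IsZMapOn Q f) (hPQ : P ⊆ Q) : IsZMapOn P f := by
  obtain ⟨hc, k, g, h1, h2⟩ := h
  exact ⟨hc.mono hPQ, k, g, h1, fun x hx => h2 x (hPQ hx)⟩

/-- If `σ` and `τ` are Z-retractions of the cube with `A_σ = A_τ`, then
`σ` restricted to `R_τ` is a Z-homeomorphism of `R_τ` onto `R_σ` whose inverse is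
the restriction of `τ` to `R_σ`. -/
theorem stmt0 {n : ℕ} (hn : 1 ≤ n) (σ τ : (Fin n → ℝ) → (Fin n → ℝ))
    (hσ : IsZRetraction σ) (hτ : IsZRetraction τ)
    (hA : retAlg σ = retAlg τ) :
    IsZHomeoOnto (zRange τ) (zRange σ) σ ∧
    (∀ x ∈ zRange τ, τ (σ x) = x) ∧ (∀ y ∈ zRange σ, σ (τ y) = y) := by
  have hτsub : zRange τ ⊆ cubeSet n := hτ.2.1.image_subset
  have hσsub : zRange σ ⊆ cubeSet n := hσ.2.1.image_subset
  have kστ : ∀ x ∈ cubeSet n, σ (τ x) = σ x := key_comp hσ hτ hA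
  have kτσ : ∀ x ∈ cubeSet n, τ (σ x) = τ x := key_comp hτ hσ hA.symm
  have invL : ∀ x ∈ zRange τ, τ (σ x) = x := by
    rintro x ⟨z, hz, rfl⟩
    rw [kστ z hz, kτσ z hz]
  have invR : ∀ y ∈ zRange σ, σ (τ y) = y := by
    rintro y ⟨z, hz, rfl⟩
    rw [kτσ z hz, kστ z hz]
  refine ⟨⟨zmap_mono hσ.1 hτsub, ?_, ?_, τ, zmap_mono hτ.1 hσsub, invL, invR⟩, invL, invR⟩
  · rw [zRange, Set.image_image]
    exact Set.image_congr kστ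
  · intro a ha b hb hab
    rw [← invL a ha, ← invL b hb, hab]
end

section
/- Let n ≥ 1, let σ be a Z-retraction of [0,1]ⁿ, and let Q ⊆ [0,1]ⁿ be a rational polyhedron such that the restriction of σ to Q is a Z-homeomorphism of Q onto R_σ. Then there exists exactly one Z-retraction τ of [0,1]ⁿ with R_τ = Q and A_τ = A_σ. -/
open Set MeasureTheory

section Aux

lemma intAffine1_comp {n : ℕ} {h : (Fin n → ℝ) → ℝ} {g : (Fin n → ℝ) → (Fin n → ℝ)}
    (hh : IsIntAffine1 h) (hg : IsIntAffine g) : IsIntAffine1 (fun x => h (g x)) := by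
  obtain ⟨m, b, hm⟩ := hh
  obtain ⟨M, c, hM⟩ := hg
  refine ⟨fun k => ∑ j, m j * M j k, (∑ j, m j * c j) + b, fun x => ?_⟩
  simp only [hm, hM]
  push_cast
  simp only [mul_add, Finset.mul_sum, Finset.sum_add_distrib, Finset.sum_mul]
  rw [Finset.sum_comm]
  ring_nf

lemma intAffine_comp {n : ℕ} {h g : (Fin n → ℝ) → (Fin n → ℝ)}
    (hh : IsIntAffine h) (hg : IsIntAffine g) : IsIntAffine (fun x => h (g x)) := by
  obtain ⟨Mh, bh, hmh⟩ := hh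
  obtain ⟨M, c, hM⟩ := hg
  refine ⟨fun i k => ∑ j, Mh i j * M j k, fun i => (∑ j, Mh i j * c j) + bh i, fun x i => ?_⟩
  simp only [hmh, hM]
  push_cast
  simp only [mul_add, Finset.mul_sum, Finset.sum_add_distrib, Finset.sum_mul]
  rw [Finset.sum_comm]
  ring_nf

lemma zmap1_comp {n : ℕ} {P P' : Set (Fin n → ℝ)} {ρ : (Fin n → ℝ) → (Fin n → ℝ)}
    {h : (Fin n → ℝ) → ℝ} (hρ : IsZMapOn P ρ) (hmap : Set.MapsTo ρ P P')
    (hh : IsZMapOn1 P' h) : IsZMapOn1 P (fun x => h (ρ x)) := by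
  obtain ⟨hρc, k, gρ, hgρa, hgρ⟩ := hρ
  obtain ⟨hhc, k', gh, hgha, hgh⟩ := hh
  refine ⟨hhc.comp hρc hmap, k * k', fun i =>
    (fun x => gh (finProdFinEquiv.symm i).2 (gρ (finProdFinEquiv.symm i).1 x)), fun i =>
    intAffine1_comp (hgha _) (hgρa _), fun x hx => ?_⟩
  obtain ⟨i, hi⟩ := hgρ x hx
  obtain ⟨j, hj⟩ := hgh (ρ x) (hmap hx)
  refine ⟨finProdFinEquiv (i, j), ?_⟩
  simp only [Equiv.symm_apply_apply]
  rw [← hi]; exact hj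

lemma zmap_comp {n : ℕ} {P P' : Set (Fin n → ℝ)} {ρ h : (Fin n → ℝ) → (Fin n → ℝ)}
    (hρ : IsZMapOn P ρ) (hmap : Set.MapsTo ρ P P')
    (hh : IsZMapOn P' h) : IsZMapOn P (fun x => h (ρ x)) := by
  obtain ⟨hρc, k, gρ, hgρa, hgρ⟩ := hρ
  obtain ⟨hhc, k', gh, hgha, hgh⟩ := hh
  refine ⟨hhc.comp hρc hmap, k * k', fun i =>
    (fun x => gh (finProdFinEquiv.symm i).2 (gρ (finProdFinEquiv.symm i).1 x)), fun i =>
    intAffine_comp (hgha _) (hgρa _), fun x hx => ?_⟩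
  obtain ⟨i, hi⟩ := hgρ x hx
  obtain ⟨j, hj⟩ := hgh (ρ x) (hmap hx)
  refine ⟨finProdFinEquiv (i, j), ?_⟩
  simp only [Equiv.symm_apply_apply]
  rw [← hi]; exact hj

/-- Composing a member of `McN n` with a Z-map of the cube into itself stays in `McN n`. -/
lemma mcn_comp {n : ℕ} {G : ↥(cubeSet n) → ℝ} (hG : G ∈ McN n)
    {ρ : (Fin n → ℝ) → (Fin n → ℝ)} (hρ : IsZMapOn (cubeSet n) ρ)
    (hmap : Set.MapsTo ρ (cubeSet n) (cubeSet n)) :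
    (fun x : ↥(cubeSet n) => G ⟨ρ x.1, hmap x.2⟩) ∈ McN n := by
  obtain ⟨hG01, g, hgz, hg⟩ := hG
  refine ⟨fun x => hG01 _, fun x => g (ρ x), zmap1_comp hρ hmap hgz, fun x => hg _⟩

/-- A Z-retraction fixes its range pointwise. -/
lemma retr_fix {n : ℕ} {τ : (Fin n → ℝ) → (Fin n → ℝ)} (hτ : IsZRetraction τ)
    {y : Fin n → ℝ} (hy : y ∈ zRange τ) : τ y = y := by
  obtain ⟨x, hx, rfl⟩ := hy
  exact hτ.2.2 x hx

end Aux

/-- Given a Z-retraction `σ` of the cube and a rational polyhedron `Q ⊆ [0,1]^n`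
such that `σ↾Q` is a Z-homeomorphism of `Q` onto `R_σ`, there is exactly one Z-retraction `τ`
of the cube with `R_τ = Q` and `A_τ = A_σ` (unique as a function on the cube). -/
theorem stmt1 {n : ℕ} (hn : 1 ≤ n) (σ : (Fin n → ℝ) → (Fin n → ℝ))
    (hσ : IsZRetraction σ) (Q : Set (Fin n → ℝ))
    (hQpoly : IsRationalPolyhedron Q) (hQsub : Q ⊆ cubeSet n)
    (hhom : IsZHomeoOnto Q (zRange σ) σ) :
    (∃ τ, IsZRetraction τ ∧ zRange τ = Q ∧ retAlg τ = retAlg σ) ∧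
    (∀ τ₁ τ₂, (IsZRetraction τ₁ ∧ zRange τ₁ = Q ∧ retAlg τ₁ = retAlg σ) →
      (IsZRetraction τ₂ ∧ zRange τ₂ = Q ∧ retAlg τ₂ = retAlg σ) →
      Set.EqOn τ₁ τ₂ (cubeSet n)) := by
  obtain ⟨hσz, hσmap, hσidem⟩ := hσ
  obtain ⟨hσQz, himg, hinj, g, hgz, hgσ, hσg⟩ := hhom
  have hmapστ : Set.MapsTo σ (cubeSet n) (zRange σ) := fun x hx => Set.mem_image_of_mem σ hx
  have hgQ : ∀ y ∈ zRange σ, g y ∈ Q := by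
    intro y hy
    rw [← himg] at hy
    obtain ⟨q, hq, rfl⟩ := hy
    rw [hgσ q hq]; exact hq
  set τ : (Fin n → ℝ) → (Fin n → ℝ) := fun x => g (σ x) with hτdef
  have hτmap : Set.MapsTo τ (cubeSet n) (cubeSet n) :=
    fun x hx => hQsub (hgQ _ (Set.mem_image_of_mem σ hx))
  have hτz : IsZMapOn (cubeSet n) τ := zmap_comp hσz hmapστ hgz
  have hτidem : ∀ x ∈ cubeSet n, τ (τ x) = τ x := by
    intro x hx
    show g (σ (g (σ x))) = g (σ x)
    rw [hσg _ (Set.mem_image_of_mem σ hx)]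
  have hτretr : IsZRetraction τ := ⟨hτz, hτmap, hτidem⟩
  have hτQ : zRange τ = Q := by
    ext y; constructor
    · rintro ⟨x, hx, rfl⟩
      exact hgQ _ (Set.mem_image_of_mem σ hx)
    · intro hy
      exact ⟨y, hQsub hy, by show g (σ y) = y; exact hgσ y hy⟩
  have hτA : retAlg τ = retAlg σ := by
    ext f; constructor
    · rintro ⟨G, hG, hf⟩
      refine ⟨fun y => G ⟨τ y.1, hτmap y.2⟩, mcn_comp hG hτz hτmap, fun x h' => ?_⟩
      have e1 : τ (σ x.1) = τ x.1 := by
        show g (σ (σ x.1)) = g (σ x.1)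
        rw [hσidem x.1 x.2]
      calc f x = G ⟨τ x.1, hτmap x.2⟩ := hf x (hτmap x.2)
        _ = G ⟨τ (σ x.1), hτmap h'⟩ := (congrArg G (Subtype.ext e1)).symm
    · rintro ⟨G, hG, hf⟩
      refine ⟨fun y => G ⟨σ y.1, hσmap y.2⟩, mcn_comp hG hσz hσmap, fun x h' => ?_⟩
      have e1 : σ (τ x.1) = σ x.1 := hσg _ (Set.mem_image_of_mem σ x.2)
      calc f x = G ⟨σ x.1, hσmap x.2⟩ := hf x (hσmap x.2)
        _ = G ⟨σ (τ x.1), hσmap h'⟩ := (congrArg G (Subtype.ext e1)).symm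
  refine ⟨⟨τ, hτretr, hτQ, hτA⟩, ?_⟩
  rintro τ₁ τ₂ ⟨h1r, h1Q, h1A⟩ ⟨h2r, h2Q, h2A⟩ x hx
  funext i
  -- the `i`-th coordinate function of `τ₁` belongs to `retAlg τ₁`
  have hGmcn : (fun y : ↥(cubeSet n) => y.1 i) ∈ McN n := by
    refine ⟨fun y => ⟨y.2.1 i, y.2.2 i⟩, fun v => v i, ⟨(continuous_apply i).continuousOn,
      1, fun _ v => v i, fun _ => ⟨fun j => if j = i then 1 else 0, 0, fun v => ?_⟩,
      fun v _ => ⟨0, rfl⟩⟩, fun _ => rfl⟩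
    push_cast
    simp [ite_mul, Finset.sum_ite_eq']
  have hfmem : (fun y : ↥(cubeSet n) => τ₁ y.1 i) ∈ retAlg τ₁ :=
    ⟨fun y : ↥(cubeSet n) => y.1 i, hGmcn, fun y h => rfl⟩
  rw [h1A, ← h2A] at hfmem
  obtain ⟨G₂, hG₂, hf₂⟩ := hfmem
  have hfix1 : ∀ q ∈ Q, τ₁ q = q := fun q hq => retr_fix h1r (h1Q ▸ hq)
  have hfix2 : ∀ q ∈ Q, τ₂ q = q := fun q hq => retr_fix h2r (h2Q ▸ hq)
  have hQval : ∀ q (hq : q ∈ Q), G₂ ⟨q, hQsub hq⟩ = q i := by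
    intro q hq
    have h2 : τ₂ q ∈ cubeSet n := h2r.2.1 (hQsub hq)
    have this : τ₁ q i = G₂ ⟨τ₂ q, h2⟩ := hf₂ ⟨q, hQsub hq⟩ h2
    rw [hfix1 q hq] at this
    rw [this]
    exact congrArg G₂ (Subtype.ext (hfix2 q hq).symm)
  have hτ₂x : τ₂ x ∈ Q := h2Q ▸ Set.mem_image_of_mem τ₂ hx
  have this : τ₁ x i = G₂ ⟨τ₂ x, hQsub hτ₂x⟩ := hf₂ ⟨x, hx⟩ (hQsub hτ₂x)
  rw [this, hQval (τ₂ x) hτ₂x]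
end

section
/- Let n ≥ 1, let η : [0,1]ⁿ → [0,1]ⁿ be a Z-map, and let P, Q ⊆ [0,1]ⁿ be rational polyhedra such that: (i) the interiors of P and of Q (in ℝⁿ) are connected; (ii) P and Q are closed domains; (iii) η(P) = η(Q); (iv) the restriction of η to P is a Z-homeomorphism of P onto η(P), and the restriction of η to Q is a Z-homeomorphism of Q onto η(Q). Then either P = Q or the interiors of P and Q are disjoint. -/
open Set MeasureTheory

lemma stmt2_aux {n : ℕ} (η : (Fin n → ℝ) → (Fin n → ℝ)) (P Q : Set (Fin n → ℝ))
    (hPconn : IsPreconnected (interior P))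
    (hcont : ContinuousOn η P) (hinj : Set.InjOn η P)
    (him : η '' P = η '' Q)
    (ρ : (Fin n → ℝ) → (Fin n → ℝ))
    (hρcont : ContinuousOn ρ (η '' Q))
    (hleft : ∀ x ∈ Q, ρ (η x) = x)
    (hright : ∀ y ∈ η '' Q, η (ρ y) = y)
    (x₀ : Fin n → ℝ) (hx₀P : x₀ ∈ interior P) (hx₀Q : x₀ ∈ Q) :
    interior P ⊆ Q := by
  set g : (Fin n → ℝ) → (Fin n → ℝ) := fun z => ρ (η z) with hg
  have hmaps : Set.MapsTo η P (η '' Q) := fun x hx => him ▸ Set.mem_image_of_mem η hx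
  have hgcont : ContinuousOn g P := hρcont.comp hcont hmaps
  have hgQ : ∀ z ∈ P, g z ∈ Q := by
    intro z hz
    obtain ⟨w, hw, hwz⟩ := hmaps hz
    have : g z = w := by rw [hg]; simp only [← hwz]; exact hleft w hw
    exact this ▸ hw
  have hηg : ∀ z ∈ P, η (g z) = η z := fun z hz => hright (η z) (hmaps hz)
  have hcontAt : ∀ x ∈ interior P, ContinuousAt g x := by
    intro x hx
    exact (hgcont x (interior_subset hx)).continuousAt
      (Filter.mem_of_superset (isOpen_interior.mem_nhds hx) interior_subset)
  set u : Set (Fin n → ℝ) := {z | z ∈ interior P ∧ g z = z} with hu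
  set v : Set (Fin n → ℝ) := {z | z ∈ interior P ∧ g z ≠ z} with hv
  have hu_open : IsOpen u := by
    rw [isOpen_iff_mem_nhds]
    rintro x ⟨hxP, hgx⟩
    have h1 : g ⁻¹' (interior P) ∈ nhds x :=
      (hcontAt x hxP) (isOpen_interior.mem_nhds (show g x ∈ interior P by rw [hgx]; exact hxP))
    filter_upwards [h1, isOpen_interior.mem_nhds hxP] with z hz1 hz2
    exact ⟨hz2, hinj (interior_subset hz1) (interior_subset hz2) (hηg z (interior_subset hz2))⟩
  have hv_open : IsOpen v := by
    rw [isOpen_iff_mem_nhds]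
    rintro x ⟨hxP, hgx⟩
    have hc : ContinuousAt (fun z => g z - z) x := (hcontAt x hxP).sub continuousAt_id
    have h1 : (fun z => g z - z) ⁻¹' ({0}ᶜ) ∈ nhds x :=
      hc (isOpen_compl_singleton.mem_nhds (by simpa [sub_eq_zero] using hgx))
    filter_upwards [h1, isOpen_interior.mem_nhds hxP] with z hz1 hz2
    exact ⟨hz2, by simpa [sub_eq_zero] using hz1⟩
  have hcover : interior P ⊆ u ∪ v := by
    intro z hz
    by_cases h : g z = z
    · exact Or.inl ⟨hz, h⟩
    · exact Or.inr ⟨hz, h⟩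
  have hune : (interior P ∩ u).Nonempty := ⟨x₀, hx₀P, hx₀P, hleft x₀ hx₀Q⟩
  intro z hz
  by_contra hzQ
  have hzv : z ∈ v := ⟨hz, fun h => hzQ (h ▸ hgQ z (interior_subset hz))⟩
  obtain ⟨w, _, hwu, hwv⟩ := hPconn u v hu_open hv_open hcover hune ⟨z, hz, hzv⟩
  exact hwv.2 hwu.2

/-- Separation lemma for Z-maps and closed-domain rational polyhedra
with connected interiors. -/
theorem stmt2 {n : ℕ} (hn : 1 ≤ n) (η : (Fin n → ℝ) → (Fin n → ℝ))
    (hη : IsZMapOn (cubeSet n) η) (hηmaps : Set.MapsTo η (cubeSet n) (cubeSet n))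
    (P Q : Set (Fin n → ℝ))
    (hPpoly : IsRationalPolyhedron P) (hQpoly : IsRationalPolyhedron Q)
    (hPsub : P ⊆ cubeSet n) (hQsub : Q ⊆ cubeSet n)
    (hPconn : IsPreconnected (interior P)) (hQconn : IsPreconnected (interior Q))
    (hPcd : IsClosedDomain P) (hQcd : IsClosedDomain Q)
    (him : η '' P = η '' Q)
    (hPhom : IsZHomeoOnto P (η '' P) η) (hQhom : IsZHomeoOnto Q (η '' Q) η) :
    P = Q ∨ interior P ∩ interior Q = ∅ := by
  by_cases hint : interior P ∩ interior Q = ∅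
  · exact Or.inr hint
  obtain ⟨x₀, hx₀P, hx₀Q⟩ := Set.nonempty_iff_ne_empty.mpr hint
  obtain ⟨⟨hPcont, _⟩, _, hPinj, ρP, ⟨hρPcont, _⟩, hρPl, hρPr⟩ := hPhom
  obtain ⟨⟨hQcont, _⟩, _, hQinj, ρQ, ⟨hρQcont, _⟩, hρQl, hρQr⟩ := hQhom
  have h1 : interior P ⊆ Q :=
    stmt2_aux η P Q hPconn hPcont hPinj him ρQ hρQcont hρQl hρQr
      x₀ hx₀P (interior_subset hx₀Q)
  have h2 : interior Q ⊆ P :=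
    stmt2_aux η Q P hQconn hQcont hQinj him.symm ρP hρPcont hρPl hρPr
      x₀ hx₀Q (interior_subset hx₀P)
  left
  have hQclosed : IsClosed Q := hQcd ▸ isClosed_closure
  have hPclosed : IsClosed P := hPcd ▸ isClosed_closure
  apply Set.Subset.antisymm
  · rw [← hPcd]; exact closure_minimal h1 hQclosed
  · rw [← hQcd]; exact closure_minimal h2 hPclosed
end

section
/- Let n ≥ 1 and let σ be a Z-retraction of [0,1]ⁿ such that there exists a Z-homeomorphism of R_σ onto [0,1]ⁿ. Then σ is the identity map of [0,1]ⁿ; consequently the identity is the unique retraction of McN([0,1]ⁿ) onto itself, i.e., the index of the free MV-algebra McN([0,1]ⁿ) equals 1. -/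
open Set MeasureTheory

/-! An integer affine map that has an integer affine left inverse on a set of positive measure
has unimodular linear part, so it preserves Lebesgue measure there. Covering the range `R_σ` by
finitely many closed pieces on which a Z-homeomorphism `f : R_σ → [0,1]ⁿ` and its inverse are
both affine shows `vol [0,1]ⁿ = vol (f R_σ) ≤ vol R_σ`. Hence the closed set `R_σ ⊆ [0,1]ⁿ` has
full measure in the cube and is the whole cube, and an idempotent map with `σ([0,1]ⁿ) = [0,1]ⁿ`
is the identity there. The algebraic part is the same observation for an idempotent surjection. -/

open scoped Matrix

section AddHaar

variable {E : Type*} [NormedAddCommGroup E] [NormedSpace ℝ E] [MeasurableSpace E] [BorelSpace E]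
  [FiniteDimensional ℝ E] (μ : Measure E) [μ.IsAddHaarMeasure]

theorem addHaar_preimage_singleton_linearMap {F : Type*} [AddCommGroup F] [Module ℝ F]
    {L : E →ₗ[ℝ] F} (hL : L ≠ 0) (w : F) : μ (L ⁻¹' {w}) = 0 := by
  rcases (L ⁻¹' {w}).eq_empty_or_nonempty with h | ⟨x₀, hx₀⟩
  · simp [h]
  have hsub : L ⁻¹' {w} ⊆ AffineSubspace.mk' x₀ (LinearMap.ker L) := by
    intro x hx
    rw [SetLike.mem_coe, AffineSubspace.mem_mk', vsub_eq_sub, LinearMap.mem_ker, map_sub,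
      hx, hx₀, sub_self]
  refine measure_mono_null hsub (Measure.addHaar_affineSubspace μ _ fun htop => hL ?_)
  have := congrArg AffineSubspace.direction htop
  rwa [AffineSubspace.direction_mk', AffineSubspace.direction_top, LinearMap.ker_eq_top] at this

theorem addHaar_image_linearMap_add (L : E →ₗ[ℝ] E) (b : E) (s : Set E) :
    μ ((fun x => L x + b) '' s) = ENNReal.ofReal |LinearMap.det L| * μ s := by
  rw [← Set.image_image (· + b) L, image_add_right, measure_preimage_add_right,
    Measure.addHaar_image_linearMap]

end AddHaar

theorem abs_det_intCast_eq_one_of_mul_eq_one {ι : Type*} [Fintype ι] [DecidableEq ι]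
    {M N : Matrix ι ι ℤ} (h : N.map (Int.cast : ℤ → ℝ) * M.map (Int.cast : ℤ → ℝ) = 1) :
    |(M.map (Int.cast : ℤ → ℝ)).det| = 1 := by
  have hdet : N.det * M.det = 1 := by
    have := congrArg Matrix.det h
    rw [Matrix.det_mul, Matrix.det_one, ← Int.cast_det, ← Int.cast_det] at this
    exact_mod_cast this
  rw [← Int.cast_det, ← Int.cast_abs, Int.isUnit_iff_abs_eq.1 (IsUnit.of_mul_eq_one_right _ hdet),
    Int.cast_one]

theorem measure_image_le_of_finset_cover {α β ι : Type*} [MeasurableSpace α] [MeasurableSpace β]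
    {μ : Measure α} {ν : Measure β} {f : α → β} {s : ι → Set α} (I : Finset ι)
    (hs : ∀ i ∈ I, MeasurableSet (s i)) (hf : ∀ i ∈ I, ∀ t ⊆ s i, ν (f '' t) ≤ μ t)
    {S : Set α} (hS : S ⊆ ⋃ i ∈ I, s i) : ν (f '' S) ≤ μ S := by
  classical
  induction I using Finset.induction_on generalizing S with
  | empty => simp [Set.subset_empty_iff.1 (by simpa using hS)]
  | insert a I _ ih =>
    have hrest : S \ s a ⊆ ⋃ i ∈ I, s i := by
      intro x hx
      simpa [hx.2] using hS hx.1
    calc ν (f '' S) = ν (f '' (S ∩ s a) ∪ f '' (S \ s a)) := by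
          rw [← Set.image_union, Set.inter_union_sdiff]
      _ ≤ ν (f '' (S ∩ s a)) + ν (f '' (S \ s a)) := measure_union_le _ _
      _ ≤ μ (S ∩ s a) + μ (S \ s a) := add_le_add
          (hf a (by simp) _ Set.inter_subset_right)
          (ih (fun i hi => hs i (by simp [hi])) (fun i hi => hf i (by simp [hi])) hrest)
      _ = μ S := measure_inter_add_sdiff S (hs a (by simp))

theorem IsClosed.subset_of_measure_diff_eq_zero {X : Type*} [TopologicalSpace X]
    [MeasurableSpace X] {μ : Measure X} [μ.IsOpenPosMeasure] {s t : Set X} (ht : IsClosed t)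
    (hs : s ⊆ closure (interior s)) (h : μ (s \ t) = 0) : s ⊆ t := by
  have hopen : interior s \ t = ∅ :=
    (isOpen_interior.sdiff ht).eq_empty_of_measure_zero
      (measure_mono_null (Set.sdiff_subset_sdiff_left interior_subset) h)
  exact hs.trans (closure_minimal (Set.sdiff_eq_empty.1 hopen) ht)

theorem Set.eqOn_id_of_image_eq {α : Type*} {σ : α → α} {s : Set α}
    (hidem : ∀ x ∈ s, σ (σ x) = σ x) (himage : σ '' s = s) : Set.EqOn σ id s := by
  intro x hx
  rw [← himage] at hx
  obtain ⟨y, hy, rfl⟩ := hx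
  exact hidem y hy

theorem Function.eq_id_of_surjective_of_idempotent {α : Type*} {ε : α → α}
    (hsurj : Function.Surjective ε) (hidem : ∀ x, ε (ε x) = ε x) : ε = id :=
  hsurj.injective_comp_right (funext hidem : ε ∘ ε = id ∘ ε)

namespace IsIntAffine

variable {n : ℕ}

theorem exists_matrix {m : ℕ} {g : (Fin n → ℝ) → (Fin m → ℝ)} (hg : IsIntAffine g) :
    ∃ (M : Matrix (Fin m) (Fin n) ℤ) (b : Fin m → ℝ),
      g = fun x => (M.map (Int.cast : ℤ → ℝ)) *ᵥ x + b := by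
  obtain ⟨M, b, hMb⟩ := hg
  refine ⟨Matrix.of M, fun i => (b i : ℝ), ?_⟩
  funext x i
  simp [hMb x i, Matrix.mulVec, dotProduct]

theorem continuous {m : ℕ} {g : (Fin n → ℝ) → (Fin m → ℝ)} (hg : IsIntAffine g) :
    Continuous g := by
  obtain ⟨M, b, rfl⟩ := hg.exists_matrix
  exact (Matrix.toLin' (M.map (Int.cast : ℤ → ℝ))).continuous_of_finiteDimensional.add
    continuous_const

/-- If `h ∘ g` fixes a set of positive measure, it is the identity map, so the linear parts of
`g` and `h` are mutually inverse integer matrices and `g` is unimodular. -/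
theorem volume_image_le_of_leftInvOn {g h : (Fin n → ℝ) → (Fin n → ℝ)} (hg : IsIntAffine g)
    (hh : IsIntAffine h) {s : Set (Fin n → ℝ)} (hs : Set.LeftInvOn h g s) :
    volume (g '' s) ≤ volume s := by
  obtain ⟨M, b, rfl⟩ := hg.exists_matrix
  obtain ⟨N, c, rfl⟩ := hh.exists_matrix
  set M' := M.map (Int.cast : ℤ → ℝ)
  set N' := N.map (Int.cast : ℤ → ℝ)
  rw [show (fun x => M' *ᵥ x + b) = fun x => Matrix.toLin' M' x + b from rfl,
    addHaar_image_linearMap_add, LinearMap.det_toLin']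
  rcases eq_or_ne (volume s) 0 with h0 | h0
  · simp [h0]
  have hNM : N' * M' = 1 := by
    by_contra hne
    have hfix : s ⊆ Matrix.toLin' (N' * M' - 1) ⁻¹' {-(N' *ᵥ b + c)} := by
      intro x hx
      have hx' : N' *ᵥ (M' *ᵥ x + b) + c = x := hs hx
      rw [Matrix.mulVec_add, Matrix.mulVec_mulVec] at hx'
      simp only [Set.mem_preimage, Matrix.toLin'_apply, Matrix.sub_mulVec, Matrix.one_mulVec,
        Set.mem_singleton_iff]
      nth_rewrite 2 [← hx']
      abel
    exact h0 (measure_mono_null hfix (addHaar_preimage_singleton_linearMap volume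
      (by rwa [Ne, LinearEquiv.map_eq_zero_iff, sub_eq_zero]) _))
  rw [abs_det_intCast_eq_one_of_mul_eq_one hNM, ENNReal.ofReal_one, one_mul]

end IsIntAffine

theorem IsZHomeoOnto.volume_le {n : ℕ} {P Q : Set (Fin n → ℝ)} {f : (Fin n → ℝ) → (Fin n → ℝ)}
    (hP : IsClosed P) (hf : IsZHomeoOnto P Q f) : volume Q ≤ volume P := by
  obtain ⟨⟨hfcont, k, g, hg, hfg⟩, rfl, -, finv, ⟨-, l, h, hh, hfinvh⟩, hleft, -⟩ := hf
  let piece : Fin k × Fin l → Set (Fin n → ℝ) := fun ij =>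
    {x ∈ P | f x = g ij.1 x} ∩ {x | h ij.2 (g ij.1 x) = x}
  refine measure_image_le_of_finset_cover (s := piece) Finset.univ (fun ij _ => ?_) (fun ij _ t ht => ?_)
    fun x hx => ?_
  · refine (IsClosed.inter ?_ (isClosed_eq ((hh _).continuous.comp (hg _).continuous)
      continuous_id)).measurableSet
    exact hP.isClosed_eq hfcont (hg _).continuous.continuousOn
  · rw [Set.image_congr fun x hx => (ht hx).1.2]
    exact (hg _).volume_image_le_of_leftInvOn (hh _) fun x hx => (ht hx).2
  · obtain ⟨i, hi⟩ := hfg x hx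
    obtain ⟨j, hj⟩ := hfinvh (f x) (Set.mem_image_of_mem f hx)
    refine Set.mem_biUnion (Finset.mem_univ (i, j)) ⟨⟨hx, hi⟩, ?_⟩
    change h j (g i x) = x
    rw [← hi, ← hj, hleft x hx]

theorem volume_cubeSet (n : ℕ) : volume (cubeSet n) = 1 := by
  simp [cubeSet, Real.volume_Icc_pi]

theorem cubeSet_subset_closure_interior (n : ℕ) : cubeSet n ⊆ closure (interior (cubeSet n)) := by
  rw [cubeSet, ← Set.pi_univ_Icc, interior_pi_set Set.finite_univ, closure_pi_set]
  simp only [Pi.zero_apply, Pi.one_apply, closure_interior_Icc zero_ne_one,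
    subset_refl]

theorem IsZRetraction.zRange_eq_cubeSet {n : ℕ} {σ : (Fin n → ℝ) → (Fin n → ℝ)}
    (hσ : IsZRetraction σ) (hh : ∃ f, IsZHomeoOnto (zRange σ) (cubeSet n) f) :
    zRange σ = cubeSet n := by
  obtain ⟨⟨hσcont, -⟩, hσmaps, -⟩ := hσ
  obtain ⟨f, hf⟩ := hh
  have hclosed : IsClosed (zRange σ) := (isCompact_Icc.image_of_continuousOn hσcont).isClosed
  have hsub : zRange σ ⊆ cubeSet n := hσmaps.image_subset
  have hfull : volume (cubeSet n) ≤ volume (zRange σ) := hf.volume_le hclosed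
  have hnull : volume (cubeSet n \ zRange σ) = 0 := by
    rw [measure_sdiff hsub hclosed.measurableSet.nullMeasurableSet
      (measure_ne_top_of_subset hsub (by simp [volume_cubeSet])),
      le_antisymm (measure_mono hsub) hfull, tsub_self]
  exact hsub.antisymm
    (hclosed.subset_of_measure_diff_eq_zero (cubeSet_subset_closure_interior n) hnull)

theorem IsMcNRetraction.eq_id {n : ℕ} {ε : ↥(McN n) → ↥(McN n)} (hε : IsMcNRetraction ε (McN n)) :
    ε = id := by
  obtain ⟨-, -, hidem, hrange⟩ := hε
  refine Function.eq_id_of_surjective_of_idempotent (Set.range_eq_univ.1 ?_) hidem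
  exact Subtype.val_injective.image_injective (hrange.trans (Subtype.coe_image_univ _).symm)

theorem stmt6_general {n : ℕ} (σ : (Fin n → ℝ) → (Fin n → ℝ))
    (hσ : IsZRetraction σ)
    (hh : ∃ f, IsZHomeoOnto (zRange σ) (cubeSet n) f) :
    Set.EqOn σ id (cubeSet n) ∧
    (∀ ε : ↥(McN n) → ↥(McN n), IsMcNRetraction ε (McN n) → ε = id) :=
  ⟨Set.eqOn_id_of_image_eq hσ.2.2 (hσ.zRange_eq_cubeSet hh), fun _ hε => hε.eq_id⟩

/-- If `σ` is a Z-retraction of the cube whose range is Z-homeomorphic to the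
whole cube, then `σ` is the identity on the cube; consequently the identity is the unique
retraction of `McN([0,1]^n)` onto itself, i.e. the index of the free MV-algebra is 1. -/
theorem stmt6 {n : ℕ} (hn : 1 ≤ n) (σ : (Fin n → ℝ) → (Fin n → ℝ))
    (hσ : IsZRetraction σ)
    (hh : ∃ f, IsZHomeoOnto (zRange σ) (cubeSet n) f) :
    Set.EqOn σ id (cubeSet n) ∧
    (∀ ε : ↥(McN n) → ↥(McN n), IsMcNRetraction ε (McN n) → ε = id) :=
  stmt6_general σ hσ hh
end

section
/- Define ρ : [0,1]² → [0,1]² by ρ(x,y) = (max(x−y,0), max(y−x,0)), and let L = ({0} × [0,1]) ∪ ([0,1] × {0}). Then ρ is a Z-retraction of [0,1]² with range L, and the set of Z-homeomorphism domains for ρ is infinite; consequently the set of retractions of McN([0,1]²) onto A_ρ is infinite. -/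
open Set MeasureTheory

/-- `ρ(x,y) = (max(x-y,0), max(y-x,0))`. -/
def rho11 : (Fin 2 → ℝ) → (Fin 2 → ℝ) := fun v => ![max (v 0 - v 1) 0, max (v 1 - v 0) 0]

/-- `L = ({0} × [0,1]) ∪ ([0,1] × {0})`. -/
def Lset : Set (Fin 2 → ℝ) :=
  {v | (v 0 = 0 ∧ 0 ≤ v 1 ∧ v 1 ≤ 1) ∨ (v 1 = 0 ∧ 0 ≤ v 0 ∧ v 0 ≤ 1)}


/-!
The map `ρ` depends only on `x - y`, so it is invariant under translations along the diagonal,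
and it fixes `L`. Hence for every `m ≥ 1` the Z-map
`s_m = diagPush m : v ↦ v + max(1 - m(x + y), 0) • (1, 1)`, which maps the cube into itself,
is a section of `ρ` over `L`. Its image `s_m(L)` is the union of the four rational segments
`(1,1)–(1/m,0)–(1,0)` and `(1,1)–(0,1/m)–(0,1)`, so it is a Z-homeomorphism domain, and
`f ↦ f ∘ s_m ∘ ρ` is a retraction of `McN([0,1]²)` onto `A_ρ`. A section is determined by its
image, and `f ↦ f ∘ s ∘ ρ` determines `s` on `L` (test it on the coordinate functions), so
distinct `m` give distinct domains and distinct retractions.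
-/
theorem IsIntAffine1.comp {n m : ℕ} {g : (Fin m → ℝ) → ℝ} {h : (Fin n → ℝ) → (Fin m → ℝ)}
    (hg : IsIntAffine1 g) (hh : IsIntAffine h) : IsIntAffine1 (g ∘ h) := by
  obtain ⟨c, b, hgb⟩ := hg
  obtain ⟨M, d, hMd⟩ := hh
  refine ⟨fun l => ∑ j, c j * M j l, b + ∑ j, c j * d j, fun x => ?_⟩
  simp only [Function.comp_apply, hgb, hMd]
  push_cast
  simp only [mul_add, Finset.mul_sum, Finset.sum_add_distrib, Finset.sum_mul, mul_assoc]
  rw [Finset.sum_comm]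
  ring

theorem IsZMapOn1.comp {n m : ℕ} {P : Set (Fin n → ℝ)} {Q : Set (Fin m → ℝ)}
    {g : (Fin m → ℝ) → ℝ} {h : (Fin n → ℝ) → (Fin m → ℝ)}
    (hg : IsZMapOn1 Q g) (hh : IsZMapOn P h) (hPQ : MapsTo h P Q) : IsZMapOn1 P (g ∘ h) := by
  obtain ⟨hgc, kg, G, hGaff, hGcov⟩ := hg
  obtain ⟨hhc, kh, H, hHaff, hHcov⟩ := hh
  refine ⟨hgc.comp hhc hPQ, kg * kh,
    fun i => G (finProdFinEquiv.symm i).1 ∘ H (finProdFinEquiv.symm i).2,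
    fun i => (hGaff _).comp (hHaff _), fun x hx => ?_⟩
  obtain ⟨j, hj⟩ := hHcov x hx
  obtain ⟨i, hi⟩ := hGcov (h x) (hPQ hx)
  refine ⟨finProdFinEquiv (i, j), ?_⟩
  simp only [Equiv.symm_apply_apply, Function.comp_apply, ← hj, ← hi]

theorem IsZMapOn.mono {n m : ℕ} {P Q : Set (Fin n → ℝ)} {f : (Fin n → ℝ) → (Fin m → ℝ)}
    (hf : IsZMapOn Q f) (hPQ : P ⊆ Q) : IsZMapOn P f :=
  let ⟨hc, k, g, hg, hcov⟩ := hf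
  ⟨hc.mono hPQ, k, g, hg, fun x hx => hcov x (hPQ hx)⟩

theorem isRationalPoint_one {n : ℕ} : IsRationalPoint (1 : Fin n → ℝ) :=
  fun _ => ⟨1, by simp⟩

theorem isRationalPoint_single {n : ℕ} (i : Fin n) (q : ℚ) :
    IsRationalPoint (Pi.single i (q : ℝ)) := by
  intro j
  refine ⟨(Pi.single i q : Fin n → ℚ) j, ?_⟩
  rcases eq_or_ne j i with rfl | hji <;> simp [*]

theorem isRationalPolyhedron_segment {n : ℕ} {a b : Fin n → ℝ}
    (ha : IsRationalPoint a) (hb : IsRationalPoint b) :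
    IsRationalPolyhedron (segment ℝ a b) := by
  classical
  refine ⟨{{a, b}}, ?_, by simp [convexHull_pair]⟩
  intro F hF v hv
  rw [Finset.mem_singleton.1 hF, Finset.mem_insert, Finset.mem_singleton] at hv
  rcases hv with rfl | rfl <;> assumption

theorem IsRationalPolyhedron.union {n : ℕ} {P Q : Set (Fin n → ℝ)}
    (hP : IsRationalPolyhedron P) (hQ : IsRationalPolyhedron Q) :
    IsRationalPolyhedron (P ∪ Q) := by
  classical
  obtain ⟨S, hS, rfl⟩ := hP
  obtain ⟨T, hT, rfl⟩ := hQ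
  exact ⟨S ∪ T, fun F hF => (Finset.mem_union.1 hF).elim (hS F) (hT F),
    (Finset.set_biUnion_union S T _).symm⟩

theorem image_Icc_eq_segment {E : Type*} [AddCommGroup E] [Module ℝ E] {f : ℝ → E} {a b : ℝ}
    (hab : a ≤ b) {p d : E} (hf : ∀ t ∈ Icc a b, f t = p + t • d) :
    f '' Icc a b = segment ℝ (f a) (f b) := by
  have hfg : EqOn f (AffineMap.lineMap p (p + d)) (segment ℝ a b) := fun t ht => by
    rw [segment_eq_Icc hab] at ht
    rw [hf t ht, AffineMap.lineMap_apply_module', add_sub_cancel_left, add_comm]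
  rw [← segment_eq_Icc hab, hfg.image_eq, image_segment, hfg (left_mem_segment ℝ a b),
    hfg (right_mem_segment ℝ a b)]

theorem Set.LeftInvOn.eqOn_of_image_eq {α β : Type*} {σ : β → α} {s s' : α → β} {R : Set α}
    (hs : LeftInvOn σ s R) (hs' : LeftInvOn σ s' R) (h : s '' R = s' '' R) : EqOn s s' R := by
  intro y hy
  obtain ⟨y', hy', he⟩ : s y ∈ s' '' R := h ▸ mem_image_of_mem s hy
  obtain rfl : y' = y := by rw [← hs' hy', he, hs hy]
  exact he.symm

theorem isZHomeoDomain_image {n : ℕ} {σ s : (Fin n → ℝ) → (Fin n → ℝ)}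
    (hσ : IsZMapOn (cubeSet n) σ) (hs : IsZMapOn (zRange σ) s)
    (hsR : MapsTo s (zRange σ) (cubeSet n)) (hinv : LeftInvOn σ s (zRange σ))
    (hpoly : IsRationalPolyhedron (s '' zRange σ)) :
    IsZHomeoDomain σ (s '' zRange σ) := by
  refine ⟨hpoly, hsR.image_subset, hσ.mono hsR.image_subset, hinv.image_image, ?_, s, hs,
    ?_, hinv⟩
  · rintro _ ⟨x, hx, rfl⟩ _ ⟨y, hy, rfl⟩ h
    rw [← hinv hx, ← hinv hy, h]
  · rintro _ ⟨y, hy, rfl⟩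
    rw [hinv hy]

namespace McN

variable {n : ℕ}

def precomp (τ : (Fin n → ℝ) → (Fin n → ℝ)) (hτ : IsZMapOn (cubeSet n) τ)
    (hmaps : MapsTo τ (cubeSet n) (cubeSet n)) (f : McN n) : McN n :=
  ⟨fun x => f.1 ⟨τ x, hmaps x.2⟩, fun _ => f.2.1 _, by
    obtain ⟨g, hg, hfg⟩ := f.2.2
    exact ⟨g ∘ τ, hg.comp hτ hmaps, fun _ => hfg _⟩⟩

def coord (i : Fin n) : McN n :=
  ⟨fun x => x.1 i, fun x => ⟨x.2.1 i, x.2.2 i⟩, fun v => v i,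
    ⟨(continuous_apply i).continuousOn, 1, fun _ v => v i,
      fun _ => ⟨Pi.single i 1, 0, fun x => by simp [Pi.single_apply]⟩, fun _ _ => ⟨0, rfl⟩⟩,
    fun _ => rfl⟩

end McN

section SectionRetraction

variable {n : ℕ} {σ s : (Fin n → ℝ) → (Fin n → ℝ)} (hσ : IsZMapOn (cubeSet n) σ)
  (hσm : MapsTo σ (cubeSet n) (cubeSet n))

def sectionRetraction (hs : IsZMapOn (cubeSet n) s)
    (hsm : MapsTo s (cubeSet n) (cubeSet n)) (f : McN n) : McN n :=
  McN.precomp σ hσ hσm (McN.precomp s hs hsm f)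

theorem isMcNRetraction_sectionRetraction (hs : IsZMapOn (cubeSet n) s)
    (hsm : MapsTo s (cubeSet n) (cubeSet n)) (hinv : LeftInvOn σ s (zRange σ)) :
    IsMcNRetraction (sectionRetraction hσ hσm hs hsm) (retAlg σ) := by
  have hfix : ∀ x ∈ cubeSet n, σ (s (σ x)) = σ x := fun x hx => hinv (mem_image_of_mem σ hx)
  refine ⟨fun f g h => rfl, fun f h => rfl, fun f => ?_, ?_⟩
  · exact Subtype.ext <| funext fun x => congrArg f.1 <| Subtype.ext <|
      congrArg s (hfix x.1 x.2)
  · refine Subset.antisymm ?_ fun F ⟨g, hg, hgF⟩ => ?_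
    · rintro _ ⟨_, ⟨f, rfl⟩, rfl⟩
      exact ⟨_, (McN.precomp s hs hsm f).2, fun x h => rfl⟩
    · let G : McN n := McN.precomp σ hσ hσm ⟨g, hg⟩
      have hFG : G.1 = F := funext fun x => (hgF x (hσm x.2)).symm
      refine ⟨G, ⟨G, Subtype.ext <| funext fun x => ?_⟩, hFG⟩
      exact congrArg g (Subtype.ext (hfix x.1 x.2))

theorem eqOn_of_sectionRetraction_eq {s' : (Fin n → ℝ) → (Fin n → ℝ)}
    (hs : IsZMapOn (cubeSet n) s) (hsm : MapsTo s (cubeSet n) (cubeSet n))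
    (hs' : IsZMapOn (cubeSet n) s') (hsm' : MapsTo s' (cubeSet n) (cubeSet n))
    (h : sectionRetraction hσ hσm hs hsm = sectionRetraction hσ hσm hs' hsm') :
    EqOn s s' (zRange σ) := by
  rintro _ ⟨x, hx, rfl⟩
  funext i
  exact congrFun (congrArg Subtype.val (congrFun h (McN.coord i))) ⟨x, hx⟩

end SectionRetraction

theorem mem_cubeSet_two {v : Fin 2 → ℝ} :
    v ∈ cubeSet 2 ↔ (0 ≤ v 0 ∧ v 0 ≤ 1) ∧ (0 ≤ v 1 ∧ v 1 ≤ 1) := by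
  simp only [cubeSet, mem_Icc, Pi.le_def, Fin.forall_fin_two, Pi.zero_apply, Pi.one_apply]
  tauto

theorem Lset_subset_cubeSet : Lset ⊆ cubeSet 2 := by
  rintro v (⟨h0, h1, h2⟩ | ⟨h1, h0, h2⟩) <;> rw [mem_cubeSet_two] <;> simp only [*] <;> norm_num

theorem Lset_eq_union_single :
    Lset = Pi.single 0 '' Icc 0 1 ∪ Pi.single 1 '' Icc 0 1 := by
  ext v
  constructor
  · rintro (⟨h0, h1, h2⟩ | ⟨h1, h0, h2⟩)
    · exact Or.inr ⟨v 1, ⟨h1, h2⟩, funext fun i => by fin_cases i <;> simp [h0]⟩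
    · exact Or.inl ⟨v 0, ⟨h0, h2⟩, funext fun i => by fin_cases i <;> simp [h1]⟩
  · rintro (⟨t, ⟨ht0, ht1⟩, rfl⟩ | ⟨t, ⟨ht0, ht1⟩, rfl⟩)
    · exact Or.inr (by simp [ht0, ht1])
    · exact Or.inl (by simp [ht0, ht1])

theorem rho11_isZMapOn (P : Set (Fin 2 → ℝ)) : IsZMapOn P rho11 := by
  refine ⟨Continuous.continuousOn (by unfold rho11; fun_prop), 2,
    ![fun v => ![v 0 - v 1, 0], fun v => ![0, v 1 - v 0]], ?_, fun x _ => ?_⟩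
  · intro i
    fin_cases i
    · exact ⟨![![1, -1], ![0, 0]], 0, fun x i => by fin_cases i <;> simp [Fin.sum_univ_two]; ring⟩
    · exact ⟨![![0, 0], ![-1, 1]], 0, fun x i => by fin_cases i <;> simp [Fin.sum_univ_two]; ring⟩
  · rcases le_total (x 1) (x 0) with h | h
    · exact ⟨0, by ext i; fin_cases i <;> simp [rho11, h, sub_nonneg.2 h]⟩
    · exact ⟨1, by ext i; fin_cases i <;> simp [rho11, h, sub_nonneg.2 h]⟩

theorem rho11_mem_Lset {x : Fin 2 → ℝ} (hx : x ∈ cubeSet 2) : rho11 x ∈ Lset := by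
  obtain ⟨⟨h00, h01⟩, h10, h11⟩ := mem_cubeSet_two.1 hx
  simp only [Lset, rho11, mem_ofPred_eq, Matrix.cons_val_zero, Matrix.cons_val_one]
  rcases le_total (x 1) (x 0) with h | h
  · exact Or.inr ⟨by simpa using h, by positivity, max_le (by linarith) zero_le_one⟩
  · exact Or.inl ⟨by simpa using h, by positivity, max_le (by linarith) zero_le_one⟩

theorem rho11_eq_self {v : Fin 2 → ℝ} (hv : v ∈ Lset) : rho11 v = v := by
  ext i
  rcases hv with ⟨h0, h1, -⟩ | ⟨h1, h0, -⟩ <;> fin_cases i <;> simp [rho11, *]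

theorem isZRetraction_rho11 : IsZRetraction rho11 :=
  ⟨rho11_isZMapOn _, fun _ hx => Lset_subset_cubeSet (rho11_mem_Lset hx),
    fun _ hx => rho11_eq_self (rho11_mem_Lset hx)⟩

theorem zRange_rho11 : zRange rho11 = Lset :=
  Subset.antisymm (image_subset_iff.2 fun _ => rho11_mem_Lset)
    fun v hv => ⟨v, Lset_subset_cubeSet hv, rho11_eq_self hv⟩

theorem rho11_add_smul_one (v : Fin 2 → ℝ) (c : ℝ) : rho11 (v + c • 1) = rho11 v := by
  ext i
  fin_cases i <;> simp [rho11]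

section DiagPush

variable {n : ℕ}

noncomputable def diagPush (m : ℕ) (v : Fin n → ℝ) : Fin n → ℝ :=
  v + max (1 - m * ∑ j, v j) 0 • 1

theorem diagPush_isZMapOn (m : ℕ) (P : Set (Fin n → ℝ)) : IsZMapOn P (diagPush m) := by
  refine ⟨Continuous.continuousOn (by unfold diagPush; fun_prop), 2,
    ![id, fun v => v + (1 - m * ∑ j, v j) • 1], ?_, fun x _ => ?_⟩
  · intro i
    fin_cases i
    · exact ⟨fun i j => if i = j then 1 else 0, 0, fun x i => by simp⟩
    · refine ⟨fun i j => (if i = j then 1 else 0) - m, 1, fun x i => ?_⟩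
      simp [sub_mul, Finset.sum_sub_distrib, ← Finset.mul_sum]
      ring
  · rcases le_total (1 - m * ∑ j, x j) 0 with h | h
    · exact ⟨0, by simp [diagPush, max_eq_right h]⟩
    · exact ⟨1, by simp [diagPush, max_eq_left h]⟩

theorem mapsTo_diagPush {m : ℕ} (hm : 1 ≤ m) : MapsTo (diagPush m) (cubeSet n) (cubeSet n) := by
  intro v ⟨hv0, hv1⟩
  have hsum : ∀ i, v i ≤ m * ∑ j, v j := fun i =>
    (Finset.single_le_sum (fun j _ => hv0 j) (Finset.mem_univ i)).trans
      (le_mul_of_one_le_left (Finset.sum_nonneg fun j _ => hv0 j) (by exact_mod_cast hm))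
  refine ⟨fun i => ?_, fun i => ?_⟩
  · simp only [diagPush, Pi.add_apply, Pi.smul_apply, Pi.one_apply, smul_eq_mul, mul_one]
    exact add_nonneg (hv0 i) (le_max_right _ _)
  · simp only [diagPush, Pi.add_apply, Pi.smul_apply, Pi.one_apply, smul_eq_mul, mul_one]
    rcases le_total (1 - m * ∑ j, v j) 0 with h | h
    · rw [max_eq_right h, add_zero]; exact hv1 i
    · rw [max_eq_left h]; linarith [hsum i]

theorem diagPush_single_of_mul_le {m : ℕ} (i : Fin n) {t : ℝ} (ht : m * t ≤ 1) :
    diagPush m (Pi.single i t) = Pi.single i t + (1 - m * t) • 1 := by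
  simp [diagPush, ht]

theorem diagPush_single_of_le_mul {m : ℕ} (i : Fin n) {t : ℝ} (ht : 1 ≤ m * t) :
    diagPush m (Pi.single i t) = Pi.single i t := by
  simp [diagPush, ht]

theorem single_eq_smul_single_one (i : Fin n) (t : ℝ) :
    Pi.single i t = t • Pi.single i (1 : ℝ) := by
  rw [← Pi.single_smul', smul_eq_mul, mul_one]

theorem diagPush_image_single_Icc {m : ℕ} (hm : 1 ≤ m) (i : Fin n) :
    diagPush m '' (Pi.single i '' Icc 0 1) =
      segment ℝ 1 (Pi.single i (m : ℝ)⁻¹) ∪ segment ℝ (Pi.single i (m : ℝ)⁻¹) (Pi.single i 1) := by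
  have hm0 : (0 : ℝ) < m := by exact_mod_cast hm
  have hinv : (m : ℝ) * (m : ℝ)⁻¹ = 1 := mul_inv_cancel₀ hm0.ne'
  have hinv_le : (m : ℝ)⁻¹ ≤ 1 := inv_le_one_of_one_le₀ (by exact_mod_cast hm)
  have hpush0 : diagPush m (Pi.single i 0) = 1 := by simp [diagPush]
  have hpush_inv := diagPush_single_of_le_mul i hinv.ge
  have hpush1 := diagPush_single_of_le_mul i (t := 1) (by simpa using hm)
  rw [image_image, ← Icc_union_Icc_eq_Icc (inv_nonneg.2 hm0.le) hinv_le, image_union,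
    image_Icc_eq_segment (inv_nonneg.2 hm0.le) (p := 1) (d := Pi.single i 1 - (m : ℝ) • 1),
    image_Icc_eq_segment hinv_le (p := 0) (d := Pi.single i 1)]
  · simp only [hpush0, hpush_inv, hpush1]
  · intro t ⟨ht, _⟩
    rw [diagPush_single_of_le_mul i (hinv ▸ by gcongr), zero_add, single_eq_smul_single_one]
  · intro t ⟨_, ht⟩
    rw [diagPush_single_of_mul_le i (hinv ▸ by gcongr), single_eq_smul_single_one]
    module

theorem isRationalPolyhedron_diagPush_image_single_Icc {m : ℕ} (hm : 1 ≤ m) (i : Fin n) :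
    IsRationalPolyhedron (diagPush m '' (Pi.single i '' Icc 0 1)) := by
  have hinv : (Pi.single i (m : ℝ)⁻¹ : Fin n → ℝ) = Pi.single i ((m⁻¹ : ℚ) : ℝ) := by push_cast; rfl
  have hone : (Pi.single i 1 : Fin n → ℝ) = Pi.single i ((1 : ℚ) : ℝ) := by push_cast; rfl
  rw [diagPush_image_single_Icc hm, hinv, hone]
  exact (isRationalPolyhedron_segment isRationalPoint_one (isRationalPoint_single _ _)).union
    (isRationalPolyhedron_segment (isRationalPoint_single _ _) (isRationalPoint_single _ _))

end DiagPush

theorem leftInvOn_rho11_diagPush (m : ℕ) : LeftInvOn rho11 (diagPush m) Lset :=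
  fun _ hv => (rho11_add_smul_one _ _).trans (rho11_eq_self hv)

theorem isZHomeoDomain_diagPush_image {m : ℕ} (hm : 1 ≤ m) :
    IsZHomeoDomain rho11 (diagPush m '' Lset) := by
  have hpoly : IsRationalPolyhedron (diagPush m '' Lset) := by
    rw [Lset_eq_union_single, image_union]
    exact (isRationalPolyhedron_diagPush_image_single_Icc hm 0).union
      (isRationalPolyhedron_diagPush_image_single_Icc hm 1)
  rw [← zRange_rho11] at hpoly ⊢
  exact isZHomeoDomain_image isZRetraction_rho11.1 (diagPush_isZMapOn _ _)
    ((mapsTo_diagPush hm).mono_left (zRange_rho11 ▸ Lset_subset_cubeSet))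
    (zRange_rho11 ▸ leftInvOn_rho11_diagPush m) hpoly

theorem eq_of_eqOn_diagPush {m m' : ℕ} (h : EqOn (diagPush m) (diagPush m') Lset) : m = m' := by
  -- at `t = 1 / (m + m' + 1)` both pushes of `(t, 0)` are active, of sizes `1 - m t` and `1 - m' t`
  set t : ℝ := ((m : ℝ) + m' + 1)⁻¹
  have hden : (1 : ℝ) ≤ m + m' + 1 := by linarith [m.cast_nonneg (α := ℝ), m'.cast_nonneg (α := ℝ)]
  have ht : 0 < t := inv_pos.2 (by linarith)
  have hmt : (m : ℝ) * t ≤ 1 := by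
    rw [mul_inv_le_iff₀ (by linarith)]; linarith
  have hmt' : (m' : ℝ) * t ≤ 1 := by
    rw [mul_inv_le_iff₀ (by linarith)]; linarith
  have hL : Pi.single 0 t ∈ Lset := by
    rw [Lset_eq_union_single]
    exact Or.inl ⟨t, ⟨ht.le, inv_le_one_of_one_le₀ hden⟩, rfl⟩
  have := congrFun (h hL) 1
  rw [diagPush_single_of_mul_le 0 hmt, diagPush_single_of_mul_le 0 hmt'] at this
  simp only [Pi.add_apply, Pi.smul_apply, Pi.one_apply, smul_eq_mul, mul_one] at this
  exact_mod_cast mul_right_cancel₀ ht.ne' (by linarith : (m : ℝ) * t = m' * t)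

/-- `ρ` is a Z-retraction of `[0,1]²` with range `L`, it has infinitely many
Z-homeomorphism domains, and consequently there are infinitely many retractions of
`McN([0,1]²)` onto `A_ρ`. -/
theorem stmt11 :
    IsZRetraction rho11 ∧ zRange rho11 = Lset ∧
    {Q : Set (Fin 2 → ℝ) | IsZHomeoDomain rho11 Q}.Infinite ∧
    {ε : ↥(McN 2) → ↥(McN 2) | IsMcNRetraction ε (retAlg rho11)}.Infinite := by
  have hm (k : ℕ) : 1 ≤ k + 1 := Nat.le_add_left 1 k
  have hρ := isZRetraction_rho11
  refine ⟨hρ, zRange_rho11, ?_, ?_⟩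
  · refine infinite_of_injective_forall_mem (f := fun k : ℕ => diagPush (k + 1) '' Lset)
      (fun k l h => ?_) fun k => isZHomeoDomain_diagPush_image (hm k)
    have := eq_of_eqOn_diagPush
      ((leftInvOn_rho11_diagPush _).eqOn_of_image_eq (leftInvOn_rho11_diagPush _) h)
    omega
  · refine infinite_of_injective_forall_mem (f := fun k : ℕ => sectionRetraction
      hρ.1 hρ.2.1 (diagPush_isZMapOn (k + 1) _) (mapsTo_diagPush (hm k)))
      (fun k l h => ?_) fun k => isMcNRetraction_sectionRetraction _ _ _ _
        (zRange_rho11 ▸ leftInvOn_rho11_diagPush _)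
    have := eq_of_eqOn_diagPush (zRange_rho11 ▸ eqOn_of_sectionRetraction_eq _ _ _ _ _ _ h)
    omega
end

section
/- Let n ≥ 1 and let P ⊆ Q be rational polyhedra contained in [0,1]ⁿ. If there exists a Z-homeomorphism of P onto Q, then P = Q. -/
/-! A Z-map sends points with coordinates in `(1/d)ℤ` to such points. The inverse of the
Z-homeomorphism therefore injects the finite set `Q ∩ (1/d)ℤⁿ` into its subset `P ∩ (1/d)ℤⁿ`,
so the two coincide for every `d`: `P` and `Q` have the same rational points. Rational points are
dense in a convex hull of rational points (perturb the weights to rational ones), hence in `Q`,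
and `P` is closed, so `Q ⊆ P`. -/

open Set MeasureTheory

lemma Set.Finite.eq_of_injOn_of_mapsTo {α : Type*} {s t : Set α} {f : α → α} (ht : t.Finite)
    (hst : s ⊆ t) (hf : MapsTo f t s) (hinj : InjOn f t) : s = t :=
  eq_of_subset_of_ncard_le hst (ncard_le_ncard_of_injOn f hf hinj (ht.subset hst)) ht

lemma isRationalPoint_centerMass {ι : Type*} [Fintype ι] {n : ℕ} (q : ι → ℚ)
    {z : ι → Fin n → ℝ} (hz : ∀ j, IsRationalPoint (z j)) :
    IsRationalPoint (Finset.univ.centerMass (fun j => (q j : ℝ)) z) := by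
  intro i
  choose r hr using hz
  refine ⟨(∑ j, q j)⁻¹ * ∑ j, q j * r j i, ?_⟩
  simp [Finset.centerMass, Finset.sum_apply, hr]

lemma convexHull_subset_closure_rational {n : ℕ} (s : Set (Fin n → ℝ))
    (hs : ∀ v ∈ s, IsRationalPoint v) :
    convexHull ℝ s ⊆ closure (convexHull ℝ s ∩ {x | IsRationalPoint x}) := by
  intro x hx
  obtain ⟨ι, _, w, z, hw₀, hw₁, hzs, rfl⟩ := mem_convexHull_iff_exists_fintype.1 hx
  set T : Set (ι → ℝ) := univ.pi fun _ => Ioi 0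
  set R : Set (ι → ℝ) := range fun q : ι → ℚ => fun j => (q j : ℝ)
  have hR : Dense R := DenseRange.piMap fun _ => Rat.denseRange_cast
  have hwT : w ∈ closure T := by
    rw [closure_pi_set]
    intro j _
    rw [closure_Ioi]
    exact hw₀ j
  have hwTR : w ∈ closure (T ∩ R) :=
    closure_minimal (hR.open_subset_closure_inter (isOpen_set_pi finite_univ
      fun _ _ => isOpen_Ioi)) isClosed_closure hwT
  have hcont : ContinuousAt (fun u : ι → ℝ => Finset.univ.centerMass u z) w := by
    have hsum : Continuous fun u : ι → ℝ => ∑ j, u j :=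
      continuous_finsetSum _ fun j _ => continuous_apply j
    have hvec : Continuous fun u : ι → ℝ => ∑ j, u j • z j :=
      continuous_finsetSum _ fun j _ => (continuous_apply j).smul continuous_const
    exact (hsum.continuousAt.inv₀ (by simp [hw₁])).smul hvec.continuousAt
  have hmem := mem_closure_image hcont hwTR
  rw [Finset.centerMass_eq_of_sum_1 _ _ hw₁] at hmem
  refine closure_mono ?_ hmem
  rintro _ ⟨_, ⟨hT, q, rfl⟩, rfl⟩
  have hι : Nonempty ι := by
    by_contra h
    simp [not_nonempty_iff.1 h] at hw₁
  refine ⟨Finset.univ.centerMass_mem_convexHull (fun j _ => (hT j trivial).le)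
      (Finset.sum_pos (fun j _ => hT j trivial) Finset.univ_nonempty) fun j _ => hzs j,
    isRationalPoint_centerMass q fun j => hs _ (hzs j)⟩

lemma IsRationalPolyhedron.subset_closure_rational {n : ℕ} {P : Set (Fin n → ℝ)}
    (hP : IsRationalPolyhedron P) : P ⊆ closure (P ∩ {x | IsRationalPoint x}) := by
  obtain ⟨S, hS, rfl⟩ := hP
  intro x hx
  obtain ⟨F, hF, hxF⟩ := mem_iUnion₂.1 hx
  refine closure_mono ?_ (convexHull_subset_closure_rational _ (hS F hF) hxF)
  exact fun y hy => ⟨mem_biUnion hF hy.1, hy.2⟩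

lemma IsRationalPolyhedron.isClosed {n : ℕ} {P : Set (Fin n → ℝ)}
    (hP : IsRationalPolyhedron P) : IsClosed P := by
  obtain ⟨S, -, rfl⟩ := hP
  exact S.finite_toSet.isClosed_biUnion fun F _ =>
    (F.finite_toSet.isCompact_convexHull (𝕜 := ℝ)).isClosed

def gridPoints (n d : ℕ) : Set (Fin n → ℝ) := {x | ∀ i, ∃ z : ℤ, x i = z / d}

lemma IsRationalPoint.exists_mem_gridPoints {n : ℕ} {x : Fin n → ℝ} (hx : IsRationalPoint x) :
    ∃ d, 0 < d ∧ x ∈ gridPoints n d := by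
  choose q hq using hx
  refine ⟨∏ i, (q i).den, Finset.prod_pos fun i _ => (q i).pos, fun i => ?_⟩
  obtain ⟨c, hc⟩ : (q i).den ∣ ∏ j, (q j).den := Finset.dvd_prod_of_mem _ (Finset.mem_univ i)
  have hc0 : (c : ℝ) ≠ 0 := by
    rintro h
    rw [Nat.cast_eq_zero.1 h, mul_zero] at hc
    exact (Finset.prod_pos fun j _ => (q j).pos).ne' hc
  refine ⟨(q i).num * c, ?_⟩
  rw [hq i, hc, Rat.cast_def]
  push_cast
  rw [mul_div_mul_right _ _ hc0]

lemma finite_cubeSet_inter_gridPoints (n : ℕ) {d : ℕ} (hd : 0 < d) :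
    (cubeSet n ∩ gridPoints n d).Finite := by
  refine ((Set.Finite.pi fun _ => Set.finite_Icc (0 : ℤ) d).image
    fun z i => (z i : ℝ) / d).subset ?_
  rintro x ⟨hxc, hxd⟩
  choose z hz using hxd
  refine ⟨z, fun i _ => ?_, funext fun i => (hz i).symm⟩
  have hd' : (0 : ℝ) < d := by exact_mod_cast hd
  have h0 := hxc.1 i
  have h1 := hxc.2 i
  rw [Pi.zero_apply, hz i, le_div_iff₀ hd', zero_mul] at h0
  rw [Pi.one_apply, hz i, div_le_one hd'] at h1
  exact ⟨by exact_mod_cast h0, by exact_mod_cast h1⟩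

lemma IsZMapOn.mapsTo_gridPoints {n m d : ℕ} {P : Set (Fin n → ℝ)}
    {f : (Fin n → ℝ) → Fin m → ℝ} (hf : IsZMapOn P f) (hd : d ≠ 0) :
    MapsTo f (P ∩ gridPoints n d) (gridPoints m d) := by
  obtain ⟨-, k, g, hg, hfg⟩ := hf
  rintro x ⟨hxP, hxd⟩ i
  obtain ⟨l, hl⟩ := hfg x hxP
  obtain ⟨M, b, hMb⟩ := hg l
  choose z hz using hxd
  refine ⟨∑ j, M i j * z j + d * b i, ?_⟩
  rw [hl, hMb, eq_div_iff (Nat.cast_ne_zero.2 hd), add_mul, Finset.sum_mul]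
  push_cast
  congr 1
  · exact Finset.sum_congr rfl fun j _ => by rw [hz j]; field_simp
  · ring

lemma inter_rational_subset_of_zMap_injOn {n : ℕ} {P Q : Set (Fin n → ℝ)}
    {g : (Fin n → ℝ) → Fin n → ℝ} (hPQ : P ⊆ Q) (hQc : Q ⊆ cubeSet n) (hg : IsZMapOn Q g)
    (hgQ : MapsTo g Q P) (hginj : InjOn g Q) : Q ∩ {x | IsRationalPoint x} ⊆ P := by
  rintro x ⟨hxQ, hx⟩
  obtain ⟨d, hd, hxd⟩ := hx.exists_mem_gridPoints
  have hfin : (Q ∩ gridPoints n d).Finite :=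
    (finite_cubeSet_inter_gridPoints n hd).subset (inter_subset_inter_left _ hQc)
  have heq : P ∩ gridPoints n d = Q ∩ gridPoints n d :=
    hfin.eq_of_injOn_of_mapsTo (inter_subset_inter_left _ hPQ)
      (fun y hy => ⟨hgQ hy.1, hg.mapsTo_gridPoints hd.ne' hy⟩) (hginj.mono inter_subset_left)
  exact (heq ▸ ⟨hxQ, hxd⟩ : x ∈ P ∩ gridPoints n d).1

theorem stmt17_general {n : ℕ} (P Q : Set (Fin n → ℝ))
    (hP : IsRationalPolyhedron P) (hQ : IsRationalPolyhedron Q)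
    (hPQ : P ⊆ Q) (hQc : Q ⊆ cubeSet n)
    (hhom : ∃ f, IsZHomeoOnto P Q f) : P = Q := by
  obtain ⟨f, -, hfP, -, g, hg, hgf, hfg⟩ := hhom
  have hgQ : MapsTo g Q P := by
    rw [← hfP]
    rintro _ ⟨x, hx, rfl⟩
    rwa [hgf x hx]
  have hginj : InjOn g Q := fun a ha b hb hab => by rw [← hfg a ha, ← hfg b hb, hab]
  refine hPQ.antisymm ?_
  calc Q ⊆ closure (Q ∩ {x | IsRationalPoint x}) := hQ.subset_closure_rational
    _ ⊆ closure P := closure_mono (inter_rational_subset_of_zMap_injOn hPQ hQc hg hgQ hginj)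
    _ = P := hP.isClosed.closure_eq

/-- Two comparable Z-homeomorphic rational polyhedra in the cube are equal. -/
theorem stmt17 {n : ℕ} (hn : 1 ≤ n) (P Q : Set (Fin n → ℝ))
    (hP : IsRationalPolyhedron P) (hQ : IsRationalPolyhedron Q)
    (hPQ : P ⊆ Q) (hQc : Q ⊆ cubeSet n)
    (hhom : ∃ f, IsZHomeoOnto P Q f) : P = Q :=
  stmt17_general P Q hP hQ hPQ hQc hhom
end

section
/- Let n ≥ 1 and let A and B be retracts of McN([0,1]ⁿ) (i.e., ranges of retractions of McN([0,1]ⁿ)). If A ⊆ B and there exists an isomorphism of A onto B (a bijection h : A → B with h(f ⊕ g) = h(f) ⊕ h(g) and h(¬f) = ¬h(f) for all f, g ∈ A), then A = B. -/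
/-!
Let `ε` retract `McN([0,1]ⁿ)` onto `A` and let `h : A ≅ B`. Then `T = h ∘ ε` is an
MV-endomorphism of `McN([0,1]ⁿ)` which maps `B` onto itself (as `B = h(A)` and `A ⊆ B`) and
satisfies `T (ε b) = T b`. Such a `T` is injective on `B`: for a rational point `z`, each
functional `f ↦ (Tᵏ f)(z)` is an MV-homomorphism into `[0,1]`, hence the evaluation at a point
`pₖ` of the cube; the coordinates of `pₖ` are values of McNaughton functions at `z`, so they lie
on the finite grid of the denominator of `z`, and `pⱼ = pₖ` for some `j < k`. Surjectivity of `T`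
on `B` then transports this periodicity back to `ε b` and `b`, which therefore agree at every
rational point, hence everywhere.
-/

open Set MeasureTheory

section MVFunctions

variable {X Y Z : Type*}

structure IsMVSubalgebra (S : Set (X → ℝ)) : Prop where
  mem_Icc : ∀ f ∈ S, ∀ x, f x ∈ Icc (0 : ℝ) 1
  one_mem : (fun _ => (1 : ℝ)) ∈ S
  mvAdd_mem : ∀ f ∈ S, ∀ g ∈ S, mvAdd f g ∈ S
  mvNeg_mem : ∀ f ∈ S, mvNeg f ∈ S

def IsMVMap (A : Set (X → ℝ)) (B : Set (Y → ℝ)) (h : A → B) : Prop :=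
  (∀ (f g : A) (hm : mvAdd f.1 g.1 ∈ A), (h ⟨mvAdd f.1 g.1, hm⟩).1 = mvAdd (h f).1 (h g).1) ∧
  (∀ (f : A) (hm : mvNeg f.1 ∈ A), (h ⟨mvNeg f.1, hm⟩).1 = mvNeg (h f).1)

def IsMVHomToUnit (S : Set (X → ℝ)) (q : S → ℝ) : Prop :=
  (∀ (f g : S) (hm : mvAdd f.1 g.1 ∈ S), q ⟨mvAdd f.1 g.1, hm⟩ = min (q f + q g) 1) ∧
  (∀ (f : S) (hm : mvNeg f.1 ∈ S), q ⟨mvNeg f.1, hm⟩ = 1 - q f)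

theorem isMVMap_id (A : Set (X → ℝ)) : IsMVMap A A id := ⟨fun _ _ _ => rfl, fun _ _ => rfl⟩

theorem isMVMap_inclusion {A B : Set (X → ℝ)} (hAB : A ⊆ B) : IsMVMap A B (inclusion hAB) :=
  ⟨fun _ _ _ => rfl, fun _ _ => rfl⟩

namespace IsMVMap

variable {A : Set (X → ℝ)} {B : Set (Y → ℝ)} {C : Set (Z → ℝ)}

theorem comp {g : A → B} {h : B → C} (hh : IsMVMap B C h) (hg : IsMVMap A B g) :
    IsMVMap A C (h ∘ g) := by
  refine ⟨fun f f' hm => ?_, fun f hm => ?_⟩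
  · have hB : mvAdd (g f).1 (g f').1 ∈ B := hg.1 f f' hm ▸ (g _).2
    rw [Function.comp_apply, show g ⟨_, hm⟩ = ⟨_, hB⟩ from Subtype.ext (hg.1 f f' hm)]
    exact hh.1 _ _ hB
  · have hB : mvNeg (g f).1 ∈ B := hg.2 f hm ▸ (g _).2
    rw [Function.comp_apply, show g ⟨_, hm⟩ = ⟨_, hB⟩ from Subtype.ext (hg.2 f hm)]
    exact hh.2 _ hB

theorem iterate {T : A → A} (hT : IsMVMap A A T) : ∀ k, IsMVMap A A T^[k]
  | 0 => isMVMap_id A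
  | k + 1 => by rw [Function.iterate_succ']; exact hT.comp (iterate hT k)

end IsMVMap

inductive IsUnaryMVTerm : (ℝ → ℝ) → Prop
  | id : IsUnaryMVTerm fun t => t
  | add {φ ψ : ℝ → ℝ} :
      IsUnaryMVTerm φ → IsUnaryMVTerm ψ → IsUnaryMVTerm fun t => min (φ t + ψ t) 1
  | neg {φ : ℝ → ℝ} : IsUnaryMVTerm φ → IsUnaryMVTerm fun t => 1 - φ t

namespace IsUnaryMVTerm

variable {φ ψ : ℝ → ℝ}

theorem comp (hφ : IsUnaryMVTerm φ) (hψ : IsUnaryMVTerm ψ) : IsUnaryMVTerm (φ ∘ ψ) := by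
  induction hφ with
  | id => exact hψ
  | add _ _ ih ih' => exact add ih ih'
  | neg _ ih => exact neg ih

theorem double : IsUnaryMVTerm fun t => min (t + t) 1 := add id id

theorem square : IsUnaryMVTerm fun t => 1 - min ((1 - t) + (1 - t)) 1 :=
  neg (add (neg id) (neg id))

theorem iterate_double (e : ℕ) : IsUnaryMVTerm (fun t : ℝ => min (t + t) 1)^[e] := by
  induction e with
  | zero => exact id
  | succ e ih => rw [Function.iterate_succ']; exact double.comp ih

theorem iterate_double_apply (e : ℕ) {t : ℝ} (ht : t ≤ 1) :
    (fun t : ℝ => min (t + t) 1)^[e] t = min (2 ^ e * t) 1 := by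
  induction e with
  | zero => simpa using ht
  | succ e ih =>
    rw [Function.iterate_succ_apply', ih, pow_succ]
    rcases le_total (2 ^ e * t) 1 with h | h
    · rw [min_eq_left h]; ring_nf
    · rw [min_eq_right h, min_eq_right (by norm_num), min_eq_right (by nlinarith)]

theorem mem {S : Set (X → ℝ)} (hS : IsMVSubalgebra S) (hφ : IsUnaryMVTerm φ) {f : X → ℝ}
    (hf : f ∈ S) : (fun x => φ (f x)) ∈ S := by
  induction hφ with
  | id => exact hf
  | add _ _ ih ih' => exact hS.mvAdd_mem _ ih _ ih'
  | neg _ ih => exact hS.mvNeg_mem _ ih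

/-- Doubling `t ↦ min (2t) 1` and squaring `t ↦ max (2t - 1) 0` double the gap `v - u` unless
`u < 1/2 < v`, and then squaring alone separates. -/
theorem exists_separating_of_le_pow (e : ℕ) {u v : ℝ} (hu : 0 ≤ u) (hv : v ≤ 1)
    (huv : 1 ≤ 2 ^ e * (v - u)) : ∃ φ, IsUnaryMVTerm φ ∧ φ u = 0 ∧ 0 < φ v := by
  induction e generalizing u v with
  | zero =>
    rw [pow_zero, one_mul] at huv
    exact ⟨_, id, by linarith, by linarith⟩
  | succ e ih =>
    rw [pow_succ] at huv
    have hpos : 0 < v - u := by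
      by_contra! h; nlinarith [pow_pos (two_pos (α := ℝ)) e]
    by_cases hv2 : v ≤ 1 / 2
    · obtain ⟨φ, hφ, h0, h1⟩ := ih (u := u + u) (v := v + v) (by linarith) (by linarith)
        (by linarith)
      refine ⟨φ ∘ fun t => min (t + t) 1, hφ.comp double, ?_, ?_⟩ <;>
        simp only [Function.comp_apply]
      · rwa [min_eq_left (by linarith)]
      · rwa [min_eq_left (by linarith)]
    by_cases hu2 : 1 / 2 ≤ u
    · obtain ⟨φ, hφ, h0, h1⟩ := ih (u := u + u - 1) (v := v + v - 1) (by linarith)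
        (by linarith) (by linarith)
      refine ⟨φ ∘ fun t => 1 - min ((1 - t) + (1 - t)) 1, hφ.comp square, ?_, ?_⟩ <;>
        simp only [Function.comp_apply]
      · rw [min_eq_left (by linarith)]; convert h0 using 2; ring
      · rw [min_eq_left (by linarith)]; convert h1 using 2; ring
    · refine ⟨_, square, ?_, ?_⟩
      · rw [min_eq_right (by linarith)]; ring
      · rw [min_eq_left (by linarith)]; linarith

theorem exists_separating {u v : ℝ} (hu : 0 ≤ u) (huv : u < v) (hv : v ≤ 1) :
    ∃ φ, IsUnaryMVTerm φ ∧ φ u = 0 ∧ 0 < φ v := by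
  obtain ⟨e, he⟩ := pow_unbounded_of_one_lt (v - u)⁻¹ one_lt_two
  refine exists_separating_of_le_pow e hu hv ?_
  rw [inv_lt_iff_one_lt_mul₀ (by linarith)] at he
  linarith

end IsUnaryMVTerm

theorem isMVHomToUnit_eval {S : Set (X → ℝ)} (x : X) : IsMVHomToUnit S fun f => f.1 x :=
  ⟨fun _ _ _ => rfl, fun _ _ => rfl⟩

namespace IsMVHomToUnit

variable {S : Set (X → ℝ)} {q : S → ℝ}

theorem comp {A : Set (Y → ℝ)} {g : A → S} (hq : IsMVHomToUnit S q) (hg : IsMVMap A S g) :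
    IsMVHomToUnit A (q ∘ g) := by
  refine ⟨fun f f' hm => ?_, fun f hm => ?_⟩
  · have hS : mvAdd (g f).1 (g f').1 ∈ S := hg.1 f f' hm ▸ (g _).2
    rw [Function.comp_apply, show g ⟨_, hm⟩ = ⟨_, hS⟩ from Subtype.ext (hg.1 f f' hm)]
    exact hq.1 _ _ hS
  · have hS : mvNeg (g f).1 ∈ S := hg.2 f hm ▸ (g _).2
    rw [Function.comp_apply, show g ⟨_, hm⟩ = ⟨_, hS⟩ from Subtype.ext (hg.2 f hm)]
    exact hq.2 _ hS

theorem map_unaryMVTerm (hS : IsMVSubalgebra S) (hq : IsMVHomToUnit S q) {φ : ℝ → ℝ}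
    (hφ : IsUnaryMVTerm φ) (f : S) (h : (fun x => φ (f.1 x)) ∈ S) :
    q ⟨fun x => φ (f.1 x), h⟩ = φ (q f) := by
  induction hφ with
  | id => rfl
  | add hφ hψ ih ih' =>
    exact (hq.1 ⟨_, hφ.mem hS f.2⟩ ⟨_, hψ.mem hS f.2⟩ h).trans (by rw [ih, ih'])
  | neg hφ ih => exact (hq.2 ⟨_, hφ.mem hS f.2⟩ h).trans (by rw [ih])

theorem map_one (hS : IsMVSubalgebra S) (hq : IsMVHomToUnit S q) :
    q ⟨fun _ => 1, hS.one_mem⟩ = 1 := by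
  set one : S := ⟨fun _ => 1, hS.one_mem⟩
  have hsum : mvAdd one.1 (mvNeg one.1) = one.1 := funext fun _ => by simp [one, mvAdd, mvNeg]
  have hm : mvAdd one.1 (mvNeg one.1) ∈ S := by rw [hsum]; exact one.2
  have h := (congrArg q (Subtype.ext hsum.symm)).trans (hq.1 one ⟨_, hS.mvNeg_mem _ one.2⟩ hm)
  rw [hq.2] at h
  simpa using h

theorem map_le_one (hS : IsMVSubalgebra S) (hq : IsMVHomToUnit S q) (f : S) : q f ≤ 1 := by
  have hzero : mvAdd f.1 (mvNeg fun _ => 1) = f.1 :=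
    funext fun x => by simpa [mvAdd, mvNeg] using (hS.mem_Icc _ f.2 x).2
  have hm : mvAdd f.1 (mvNeg fun _ => 1) ∈ S := by rw [hzero]; exact f.2
  have h := (congrArg q (Subtype.ext hzero.symm)).trans
    (hq.1 f ⟨_, hS.mvNeg_mem _ hS.one_mem⟩ hm)
  exact h ▸ min_le_right _ _

theorem map_nonneg (hS : IsMVSubalgebra S) (hq : IsMVHomToUnit S q) (f : S) : 0 ≤ q f := by
  have h := hq.map_le_one hS ⟨_, hS.mvNeg_mem _ f.2⟩
  rw [hq.2] at h
  linarith

variable [TopologicalSpace X]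

theorem exists_eq_zero [CompactSpace X] [Nonempty X] (hS : IsMVSubalgebra S)
    (hq : IsMVHomToUnit S q) {g : S} (hg : Continuous g.1) (hqg : q g = 0) : ∃ x, g.1 x = 0 := by
  by_contra! hne
  obtain ⟨x₀, -, hx₀⟩ := isCompact_univ.exists_isMinOn univ_nonempty hg.continuousOn
  have hδ : 0 < g.1 x₀ := lt_of_le_of_ne (hS.mem_Icc _ g.2 x₀).1 (hne x₀).symm
  obtain ⟨e, he⟩ := pow_unbounded_of_one_lt (g.1 x₀)⁻¹ one_lt_two
  rw [inv_lt_iff_one_lt_mul₀ hδ] at he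
  have hφ := IsUnaryMVTerm.iterate_double e
  have hφg : (fun x => (fun t : ℝ => min (t + t) 1)^[e] (g.1 x)) = fun _ => 1 := by
    funext x
    rw [IsUnaryMVTerm.iterate_double_apply e (hS.mem_Icc _ g.2 x).2, min_eq_right]
    nlinarith [isMinOn_iff.1 hx₀ x trivial, pow_pos (two_pos (α := ℝ)) e]
  have h := hq.map_unaryMVTerm hS hφ g (hφ.mem hS g.2)
  rw [congrArg q (Subtype.ext hφg : (⟨_, _⟩ : S) = ⟨_, hS.one_mem⟩), hq.map_one hS, hqg,
    IsUnaryMVTerm.iterate_double_apply e zero_le_one] at h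
  norm_num at h

theorem exists_forall_eq_zero [CompactSpace X] [Nonempty X] (hS : IsMVSubalgebra S)
    (hcont : ∀ f ∈ S, Continuous f) (hq : IsMVHomToUnit S q) :
    ∃ x₀, ∀ g : S, q g = 0 → g.1 x₀ = 0 := by
  have hzero : q ⟨_, hS.mvNeg_mem _ hS.one_mem⟩ = 0 := by
    rw [hq.2 ⟨_, hS.one_mem⟩, hq.map_one hS, sub_self]
  have : Nonempty {g : S // q g = 0} := ⟨⟨_, hzero⟩⟩
  have hclosed (g : {g : S // q g = 0}) : IsClosed {x | g.1.1 x = 0} :=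
    isClosed_eq (hcont _ g.1.2) continuous_const
  have hdir : Directed (· ⊇ ·) fun g : {g : S // q g = 0} => {x | g.1.1 x = 0} := by
    rintro ⟨g, hg⟩ ⟨g', hg'⟩
    have hsum : q ⟨_, hS.mvAdd_mem _ g.2 _ g'.2⟩ = 0 := by rw [hq.1, hg, hg']; norm_num
    have hzeros (x : X) (hx : mvAdd g.1 g'.1 x = 0) : g.1 x = 0 ∧ g'.1 x = 0 := by
      have := (hS.mem_Icc _ g.2 x).1
      have := (hS.mem_Icc _ g'.2 x).1
      simp only [mvAdd] at hx
      rcases min_cases (g.1 x + g'.1 x) 1 with ⟨h, -⟩ | ⟨h, -⟩ <;> rw [h] at hx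
      · constructor <;> linarith
      · norm_num at hx
    exact ⟨⟨_, hsum⟩, fun x hx => (hzeros x hx).1, fun x hx => (hzeros x hx).2⟩
  obtain ⟨x₀, hx₀⟩ := IsCompact.nonempty_iInter_of_directed_nonempty_isCompact_isClosed _ hdir
    (fun g => hq.exists_eq_zero hS (hcont _ g.1.2) g.2) (fun g => (hclosed g).isCompact) hclosed
  exact ⟨x₀, fun g hg => mem_iInter.1 hx₀ ⟨g, hg⟩⟩

/-- The point is a common zero of the kernel of `q`: a unary term separating `q f < f x₀` would
give a kernel element that does not vanish at `x₀`. -/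
theorem exists_eq_eval [CompactSpace X] [Nonempty X] (hS : IsMVSubalgebra S)
    (hcont : ∀ f ∈ S, Continuous f) (hq : IsMVHomToUnit S q) : ∃ x₀, ∀ f : S, q f = f.1 x₀ := by
  obtain ⟨x₀, hx₀⟩ := hq.exists_forall_eq_zero hS hcont
  have hle (f : S) : f.1 x₀ ≤ q f := by
    by_contra! hlt
    obtain ⟨φ, hφ, h0, hpos⟩ :=
      IsUnaryMVTerm.exists_separating (hq.map_nonneg hS f) hlt (hS.mem_Icc _ f.2 x₀).2
    exact hpos.ne' (hx₀ ⟨_, hφ.mem hS f.2⟩ (by rw [hq.map_unaryMVTerm hS hφ, h0]))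
  refine ⟨x₀, fun f => le_antisymm ?_ (hle f)⟩
  have h := hle ⟨_, hS.mvNeg_mem _ f.2⟩
  rw [hq.2] at h
  simp only [mvNeg] at h
  linarith

end IsMVHomToUnit

end MVFunctions

section ZMaps

variable {n : ℕ}

namespace IsIntAffine1

theorem const (c : ℤ) : IsIntAffine1 (n := n) fun _ => (c : ℝ) := ⟨0, c, fun _ => by simp⟩

theorem add {g g' : (Fin n → ℝ) → ℝ} (hg : IsIntAffine1 g) (hg' : IsIntAffine1 g') :
    IsIntAffine1 fun x => g x + g' x := by
  obtain ⟨m, b, hg⟩ := hg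
  obtain ⟨m', b', hg'⟩ := hg'
  refine ⟨m + m', b + b', fun x => ?_⟩
  simp only [hg, hg', Pi.add_apply, Int.cast_add, add_mul, Finset.sum_add_distrib]
  ring

theorem neg {g : (Fin n → ℝ) → ℝ} (hg : IsIntAffine1 g) : IsIntAffine1 fun x => -g x := by
  obtain ⟨m, b, hg⟩ := hg
  refine ⟨-m, -b, fun x => ?_⟩
  simp only [hg, Pi.neg_apply, Int.cast_neg, neg_mul, Finset.sum_neg_distrib]
  ring

end IsIntAffine1

namespace IsZMapOn1

variable {P : Set (Fin n → ℝ)} {F G : (Fin n → ℝ) → ℝ}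

theorem of_fintype {ι : Type*} [Fintype ι] (hF : ContinuousOn F P) (g : ι → (Fin n → ℝ) → ℝ)
    (hg : ∀ i, IsIntAffine1 (g i)) (hFg : ∀ x ∈ P, ∃ i, F x = g i x) : IsZMapOn1 P F := by
  let e := Fintype.equivFin ι
  refine ⟨hF, _, g ∘ e.symm, fun i => hg _, fun x hx => ?_⟩
  obtain ⟨i, hi⟩ := hFg x hx
  exact ⟨e i, by simp [hi]⟩

theorem const (c : ℤ) : IsZMapOn1 P fun _ => (c : ℝ) :=
  of_fintype continuousOn_const (fun _ : Unit => _) (fun _ => IsIntAffine1.const c)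
    fun _ _ => ⟨(), rfl⟩

theorem add (hF : IsZMapOn1 P F) (hG : IsZMapOn1 P G) : IsZMapOn1 P fun x => F x + G x := by
  obtain ⟨hFc, k, g, hg, hFg⟩ := hF
  obtain ⟨hGc, k', g', hg', hGg⟩ := hG
  refine of_fintype (ContinuousOn.add hFc hGc) (fun (p : Fin k × Fin k') x => g p.1 x + g' p.2 x)
    (fun p => (hg _).add (hg' _)) fun x hx => ?_
  obtain ⟨i, hi⟩ := hFg x hx
  obtain ⟨j, hj⟩ := hGg x hx
  exact ⟨(i, j), by rw [hi, hj]⟩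

theorem neg (hF : IsZMapOn1 P F) : IsZMapOn1 P fun x => -F x := by
  obtain ⟨hFc, k, g, hg, hFg⟩ := hF
  refine of_fintype (ContinuousOn.neg hFc) (fun i x => -g i x) (fun i => (hg i).neg) fun x hx => ?_
  obtain ⟨i, hi⟩ := hFg x hx
  exact ⟨i, by rw [hi]⟩

theorem sub (hF : IsZMapOn1 P F) (hG : IsZMapOn1 P G) : IsZMapOn1 P fun x => F x - G x := by
  simpa only [sub_eq_add_neg] using hF.add hG.neg

theorem min (hF : IsZMapOn1 P F) (hG : IsZMapOn1 P G) : IsZMapOn1 P fun x => min (F x) (G x) := by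
  obtain ⟨hFc, k, g, hg, hFg⟩ := hF
  obtain ⟨hGc, k', g', hg', hGg⟩ := hG
  refine of_fintype (ContinuousOn.inf hFc hGc) (Sum.elim g g') (Sum.rec hg hg') fun x hx => ?_
  rcases min_choice (F x) (G x) with h | h <;> rw [h]
  · obtain ⟨i, hi⟩ := hFg x hx
    exact ⟨Sum.inl i, hi⟩
  · obtain ⟨j, hj⟩ := hGg x hx
    exact ⟨Sum.inr j, hj⟩

end IsZMapOn1

end ZMaps

section McN

variable {n : ℕ}

instance : CompactSpace (cubeSet n) := isCompact_iff_compactSpace.mp isCompact_Icc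

instance : Nonempty (cubeSet n) := ⟨⟨0, le_rfl, zero_le_one⟩⟩

theorem isMVSubalgebra_McN : IsMVSubalgebra (McN n) where
  mem_Icc _ hf := hf.1
  one_mem := ⟨fun _ => by simp, _, by simpa using IsZMapOn1.const (n := n) 1, fun _ => rfl⟩
  mvAdd_mem := by
    rintro f ⟨hf, F, hF, hfF⟩ g ⟨hg, G, hG, hgG⟩
    obtain rfl : f = fun x => F x.1 := funext hfF
    obtain rfl : g = fun x => G x.1 := funext hgG
    refine ⟨fun x => ⟨le_min ?_ zero_le_one, min_le_right _ _⟩, _,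
      by simpa using (hF.add hG).min (IsZMapOn1.const 1), fun _ => rfl⟩
    linarith [(hf x).1, (hg x).1]
  mvNeg_mem := by
    rintro f ⟨hf, F, hF, hfF⟩
    obtain rfl : f = fun x => F x.1 := funext hfF
    refine ⟨fun x => ?_, _, by simpa using (IsZMapOn1.const 1).sub hF, fun _ => rfl⟩
    simp only [mvNeg, mem_Icc, sub_nonneg, sub_le_self_iff]
    exact (hf x).symm

theorem continuous_of_mem_McN {f : cubeSet n → ℝ} (hf : f ∈ McN n) : Continuous f := by
  obtain ⟨-, F, ⟨hF, -⟩, hfF⟩ := hf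
  obtain rfl : f = fun x => F x.1 := funext hfF
  exact hF.domRestrict

theorem coord_mem_McN (i : Fin n) : (fun x : cubeSet n => x.1 i) ∈ McN n := by
  refine ⟨fun x => ⟨x.2.1 i, x.2.2 i⟩, fun v => v i,
    IsZMapOn1.of_fintype (continuous_apply i).continuousOn (fun _ : Unit => fun v => v i)
      (fun _ => ⟨Pi.single i 1, 0, fun x => ?_⟩) fun _ _ => ⟨(), rfl⟩, fun _ => rfl⟩
  simp [Pi.single_apply]

end McN

section GridPoints

variable {n : ℕ}

def IsGridPoint (d : ℕ) (x : Fin n → ℝ) : Prop := ∀ i, ∃ m : ℤ, x i = m / d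

theorem IsRationalPoint.exists_isGridPoint {x : Fin n → ℝ} (hx : IsRationalPoint x) :
    ∃ d : ℕ, 0 < d ∧ IsGridPoint d x := by
  choose r hr using hx
  refine ⟨∏ i, (r i).den, Finset.prod_pos fun i _ => (r i).pos, fun i => ?_⟩
  obtain ⟨k, hk⟩ : (r i).den ∣ ∏ j, (r j).den := Finset.dvd_prod_of_mem _ (Finset.mem_univ i)
  have hk0 : (k : ℝ) ≠ 0 := by
    rintro h
    simp only [Nat.cast_eq_zero] at h
    exact (Finset.prod_pos fun j _ => (r j).pos).ne' (by rw [hk, h, mul_zero])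
  refine ⟨(r i).num * k, ?_⟩
  rw [hr i, Rat.cast_def, hk]
  push_cast
  field_simp

theorem IsIntAffine1.exists_eq_div {g : (Fin n → ℝ) → ℝ} (hg : IsIntAffine1 g) {d : ℕ}
    (hd : d ≠ 0) {x : Fin n → ℝ} (hx : IsGridPoint d x) : ∃ m : ℤ, g x = m / d := by
  obtain ⟨M, b, hg⟩ := hg
  choose m hm using hx
  refine ⟨∑ j, M j * m j + b * d, ?_⟩
  have hd' : (d : ℝ) ≠ 0 := by exact_mod_cast hd
  rw [hg, eq_div_iff hd']
  push_cast
  simp only [hm, add_mul, Finset.sum_mul, mul_assoc, div_mul_cancel₀ _ hd']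

theorem exists_eq_div_of_mem_McN {f : cubeSet n → ℝ} (hf : f ∈ McN n) {d : ℕ} (hd : d ≠ 0)
    {x : cubeSet n} (hx : IsGridPoint d x.1) : ∃ m : ℤ, f x = m / d := by
  obtain ⟨-, F, ⟨-, k, g, hg, hFg⟩, hfF⟩ := hf
  obtain ⟨i, hi⟩ := hFg x.1 x.2
  rw [hfF, hi]
  exact (hg i).exists_eq_div hd hx

theorem finite_isGridPoint {d : ℕ} (hd : 0 < d) : {x : cubeSet n | IsGridPoint d x.1}.Finite := by
  let grid : Set ℝ := (fun m : ℤ => (m : ℝ) / d) '' Icc 0 d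
  have hgrid : grid.Finite := (Set.finite_Icc _ _).image _
  refine ((Set.Finite.pi fun _ : Fin n => hgrid).preimage Subtype.val_injective.injOn).subset ?_
  intro x hx i _
  obtain ⟨m, hm⟩ := hx i
  have hd' : (0 : ℝ) < d := by exact_mod_cast hd
  have h0 : (0 : ℝ) ≤ m := by
    have := x.2.1 i
    rw [hm, Pi.zero_apply, div_nonneg_iff] at this
    rcases this with ⟨h, -⟩ | ⟨-, h⟩ <;> linarith
  have h1 : (m : ℝ) ≤ d := by
    have := x.2.2 i
    rwa [hm, Pi.one_apply, div_le_one hd'] at this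
  exact ⟨m, ⟨by exact_mod_cast h0, by exact_mod_cast h1⟩, hm.symm⟩

theorem dense_isRationalPoint (n : ℕ) : Dense {x : cubeSet n | IsRationalPoint x.1} := by
  let clamp : (Fin n → ℝ) → cubeSet n := fun y =>
    ⟨fun i => projIcc 0 1 zero_le_one (y i), fun i => (projIcc _ _ _ (y i)).2.1,
      fun i => (projIcc _ _ _ (y i)).2.2⟩
  have hclamp : Continuous clamp := Continuous.subtype_mk (continuous_pi fun i =>
    continuous_subtype_val.comp (continuous_projIcc.comp (continuous_apply i))) _
  have hsurj : Function.Surjective clamp := fun x => ⟨x.1, Subtype.ext (funext fun i => by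
    have h0 : 0 ≤ x.1 i := x.2.1 i
    have h1 : x.1 i ≤ 1 := x.2.2 i
    simp only [clamp, coe_projIcc, min_eq_right h1, max_eq_right h0])⟩
  have hrat : DenseRange (Pi.map fun _ : Fin n => (Rat.cast : ℚ → ℝ)) :=
    DenseRange.piMap fun _ => Rat.denseRange_cast
  refine (hsurj.denseRange.comp hrat hclamp).mono ?_
  rintro _ ⟨r, rfl⟩ i
  exact ⟨max 0 (min 1 (r i)), by simp [clamp, coe_projIcc]⟩

end GridPoints

theorem Set.SurjOn.apply_eq_of_comp_iterate_eq {α β : Type*} {T : α → α} {s : Set α}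
    (hs : SurjOn T s s) {q : α → β} {j k : ℕ} (hjk : j < k) (hq : ∀ x, q (T^[j] x) = q (T^[k] x))
    {a b : α} (ha : a ∈ s) (hb : b ∈ s) (hab : T a = T b) : q a = q b := by
  obtain ⟨m, rfl⟩ : ∃ m, k = m + 1 + j := ⟨k - j - 1, by omega⟩
  obtain ⟨a, -, rfl⟩ := hs.iterate j ha
  obtain ⟨b, -, rfl⟩ := hs.iterate j hb
  rw [hq, hq, Function.iterate_add_apply T (m + 1) j a, Function.iterate_add_apply T (m + 1) j b,
    Function.iterate_succ_apply, Function.iterate_succ_apply, hab]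

namespace McN

variable {n : ℕ} {T : McN n → McN n}

theorem exists_lt_eval_iterate_eq (hT : IsMVMap (McN n) (McN n) T) {z : cubeSet n}
    (hz : IsRationalPoint z.1) : ∃ j k, j < k ∧ ∀ f, (T^[j] f).1 z = (T^[k] f).1 z := by
  obtain ⟨d, hd, hzd⟩ := hz.exists_isGridPoint
  choose p hp using fun k => ((isMVHomToUnit_eval z).comp (hT.iterate k)).exists_eq_eval
    isMVSubalgebra_McN fun _ => continuous_of_mem_McN
  have hpd (k : ℕ) : p k ∈ {x : cubeSet n | IsGridPoint d x.1} := fun i =>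
    (hp k ⟨_, coord_mem_McN i⟩).symm ▸ exists_eq_div_of_mem_McN (T^[k] _).2 hd.ne' hzd
  obtain ⟨j, k, hjk, hpjk⟩ := Set.Finite.exists_lt_map_eq_of_forall_mem hpd (finite_isGridPoint hd)
  exact ⟨j, k, hjk, fun f => (hp j f).trans (hpjk ▸ (hp k f).symm)⟩

theorem injOn_of_surjOn (hT : IsMVMap (McN n) (McN n) T) {s : Set (McN n)} (hs : SurjOn T s s) :
    InjOn T s := by
  intro a ha b hb hab
  refine Subtype.ext (Continuous.ext_on (dense_isRationalPoint n) (continuous_of_mem_McN a.2)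
    (continuous_of_mem_McN b.2) fun z hz => ?_)
  obtain ⟨j, k, hjk, hq⟩ := exists_lt_eval_iterate_eq hT hz
  exact hs.apply_eq_of_comp_iterate_eq (q := fun f => f.1 z) hjk hq ha hb hab

end McN

namespace IsMcNRetraction

variable {n : ℕ} {ε : McN n → McN n} {A : Set (cubeSet n → ℝ)}

theorem subset_McN (hε : IsMcNRetraction ε A) : A ⊆ McN n := by
  rw [← hε.2.2.2]
  rintro _ ⟨f, -, rfl⟩
  exact f.2

theorem apply_mem (hε : IsMcNRetraction ε A) (f : McN n) : (ε f).1 ∈ A :=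
  hε.2.2.2 ▸ ⟨ε f, mem_range_self f, rfl⟩

theorem apply_eq_self (hε : IsMcNRetraction ε A) {f : McN n} (hf : f.1 ∈ A) : ε f = f := by
  rw [← hε.2.2.2] at hf
  obtain ⟨_, ⟨g, rfl⟩, hg⟩ := hf
  rw [← Subtype.ext hg, hε.2.2.1]

theorem isMVMap_codRestrict (hε : IsMcNRetraction ε A) :
    IsMVMap (McN n) A fun f => ⟨(ε f).1, hε.apply_mem f⟩ :=
  ⟨hε.1, hε.2.1⟩

end IsMcNRetraction

theorem stmt18_general {n : ℕ} (A B : Set (↥(cubeSet n) → ℝ))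
    (hA : ∃ ε, IsMcNRetraction ε A) (hB : ∃ ε, IsMcNRetraction ε B)
    (hAB : A ⊆ B) (hiso : ∃ h : ↥A → ↥B, IsMVIsoFun A B h) : A = B := by
  obtain ⟨ε, hε⟩ := hA
  obtain ⟨h, hbij, hh⟩ := hiso
  have hBM : B ⊆ McN n := hB.elim fun _ hεB => hεB.subset_McN
  let T : McN n → McN n := inclusion hBM ∘ h ∘ fun f => ⟨(ε f).1, hε.apply_mem f⟩
  have hT : IsMVMap (McN n) (McN n) T :=
    (isMVMap_inclusion hBM).comp ((show IsMVMap A B h from hh).comp hε.isMVMap_codRestrict)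
  have hs : SurjOn T {f | f.1 ∈ B} {f | f.1 ∈ B} := by
    intro b hb
    obtain ⟨a, ha⟩ := hbij.2 ⟨b.1, hb⟩
    have hεa : ε ⟨a.1, hε.subset_McN a.2⟩ = ⟨a.1, _⟩ := hε.apply_eq_self a.2
    exact ⟨⟨a.1, hε.subset_McN a.2⟩, hAB a.2, Subtype.ext (by simp [T, hεa, ha])⟩
  refine hAB.antisymm fun b hb => ?_
  let f : McN n := ⟨b, hBM hb⟩
  have hεb : ε f = f := McN.injOn_of_surjOn hT hs (hAB (hε.apply_mem f)) (show f.1 ∈ B from hb)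
    (by simp [T, hε.2.2.1])
  simpa [hεb] using hε.apply_mem f

/-- Two comparable isomorphic retracts of `McN([0,1]^n)` are equal. -/
theorem stmt18 {n : ℕ} (hn : 1 ≤ n) (A B : Set (↥(cubeSet n) → ℝ))
    (hA : ∃ ε, IsMcNRetraction ε A) (hB : ∃ ε, IsMcNRetraction ε B)
    (hAB : A ⊆ B) (hiso : ∃ h : ↥A → ↥B, IsMVIsoFun A B h) : A = B :=
  stmt18_general A B hA hB hAB hiso
end
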